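/- arXiv:2102.02167 — 11 statements merged into one kernel-verified Lean document; each statement's English description precedes it below -/
import Mathlib

section
/- Let γ_t = (t-1)/(t+2) for integers t ≥ 1. Then for all integers t ≥ 1, the sum ∑_{k=2}^{t} ∏_{j=k}^{t} γ_j ≥ (t-1)²/(4(t+2)). -/
lemma aux_sum (t : ℕ) (ht : 1 ≤ t) :
    (∑ k ∈ Finset.Icc 2 t, ∏ j ∈ Finset.Icc k t, (((j : ℝ) - 1) / ((j : ℝ) + 2)))
      = ((t : ℝ) - 1) / 4 := by
  induction t with
  | zero => omega
  | succ n ih =>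
    rcases Nat.lt_or_ge n 1 with h | hn
    · interval_cases n
      simp
    · have ihn := ih hn
      rw [Finset.sum_Icc_succ_top (by omega : 2 ≤ n + 1)]
      have hcongr : ∀ k ∈ Finset.Icc 2 n,
          (∏ j ∈ Finset.Icc k (n+1), (((j : ℝ) - 1) / ((j : ℝ) + 2)))
            = (∏ j ∈ Finset.Icc k n, (((j : ℝ) - 1) / ((j : ℝ) + 2))) *
              ((((n:ℝ)+1) - 1) / (((n:ℝ)+1) + 2)) := by
        intro k hk
        simp only [Finset.mem_Icc] at hk
        rw [Finset.prod_Icc_succ_top (by omega : k ≤ n + 1)]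
        push_cast
        ring
      rw [Finset.sum_congr rfl hcongr, ← Finset.sum_mul, ihn, Finset.Icc_self,
        Finset.prod_singleton]
      have hpos : ((n : ℝ) + 3) ≠ 0 := by positivity
      push_cast
      field_simp
      ring

/-- Claim: with γ_j = (j-1)/(j+2), for all t ≥ 1,
    ∑_{k=2}^{t} ∏_{j=k}^{t} γ_j ≥ (t-1)²/(4(t+2)). -/
theorem stmt_0 (t : ℕ) (ht : 1 ≤ t) :
    ((t : ℝ) - 1) ^ 2 / (4 * ((t : ℝ) + 2)) ≤
      ∑ k ∈ Finset.Icc 2 t, ∏ j ∈ Finset.Icc k t, (((j : ℝ) - 1) / ((j : ℝ) + 2)) := by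
  rw [aux_sum t ht]
  have h1 : (1 : ℝ) ≤ (t : ℝ) := by exact_mod_cast ht
  rw [div_le_div_iff₀ (by positivity) (by norm_num)]
  nlinarith [sq_nonneg ((t : ℝ) - 1)]
end

section
/- Let γ_t = (t-1)/(t+2) for integers t ≥ 1. Then for all integers n, m ≥ 1, ∑_{k=n}^{m} ∏_{t=n}^{k-1} γ_{t+1} ≥ (n/2)·(1 - n²/(m+1)²). -/
lemma prod_eq (n : ℕ) (hn : 1 ≤ n) : ∀ k, n ≤ k →
    ∏ t ∈ Finset.Icc n (k - 1), ((t : ℝ) / ((t : ℝ) + 3)) =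
      ((n:ℝ)*((n:ℝ)+1)*((n:ℝ)+2)) / ((k:ℝ)*((k:ℝ)+1)*((k:ℝ)+2)) := by
  intro k hk
  induction k, hk using Nat.le_induction with
  | base =>
      rw [Finset.Icc_eq_empty (by omega), Finset.prod_empty]
      have h1 : (0:ℝ) < n := by exact_mod_cast hn
      field_simp
  | succ k hk ih =>
      have hk1 : 1 ≤ k := le_trans hn hk
      have hkr : (k + 1 : ℕ) - 1 = (k - 1) + 1 := by omega
      rw [hkr, Finset.prod_Icc_succ_top (by omega), ih]
      have h2 : ((k - 1 : ℕ) + 1 : ℕ) = k := by omega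
      rw [h2]
      have h0 : (0:ℝ) < n := by exact_mod_cast hn
      have h3 : (0:ℝ) < k := by exact_mod_cast hk1
      push_cast
      field_simp
      ring

lemma sum_eq (n : ℕ) (hn : 1 ≤ n) : ∀ m, n ≤ m →
    ∑ k ∈ Finset.Icc n m, ∏ t ∈ Finset.Icc n (k - 1), ((t : ℝ) / ((t : ℝ) + 3)) =
      ((n:ℝ)+2)/2 - ((n:ℝ)*((n:ℝ)+1)*((n:ℝ)+2)) / (2*((m:ℝ)+1)*((m:ℝ)+2)) := by
  intro m hm
  induction m, hm using Nat.le_induction with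
  | base =>
      rw [Finset.Icc_self, Finset.sum_singleton, prod_eq n hn n le_rfl]
      have h0 : (0:ℝ) < n := by exact_mod_cast hn
      field_simp
      ring
  | succ m hm ih =>
      rw [Finset.sum_Icc_succ_top (by omega), ih, prod_eq n hn (m+1) (by omega)]
      have h0 : (0:ℝ) < n := by exact_mod_cast hn
      have h3 : (0:ℝ) < m := by exact_mod_cast (le_trans hn hm)
      push_cast
      field_simp
      ring

/-- Claim: with γ_t = (t-1)/(t+2) (so γ_{t+1} = t/(t+3)), for all n, m ≥ 1,
    ∑_{k=n}^{m} ∏_{t=n}^{k-1} γ_{t+1} ≥ (n/2)(1 - n²/(m+1)²). -/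
theorem stmt_1 (n m : ℕ) (hn : 1 ≤ n) (hm : 1 ≤ m) :
    ((n : ℝ) / 2) * (1 - (n : ℝ) ^ 2 / ((m : ℝ) + 1) ^ 2) ≤
      ∑ k ∈ Finset.Icc n m, ∏ t ∈ Finset.Icc n (k - 1), ((t : ℝ) / ((t : ℝ) + 3)) := by
  rcases le_or_gt n m with h | h
  · rw [sum_eq n hn m h]
    have h0 : (1:ℝ) ≤ n := by exact_mod_cast hn
    have h1 : (n:ℝ) ≤ m := by exact_mod_cast h
    have hm1 : (0:ℝ) < (m:ℝ) + 1 := by linarith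
    have hm2 : (0:ℝ) < (m:ℝ) + 2 := by linarith
    rw [← sub_nonneg]
    have heq : (↑n + 2) / 2 - (↑n:ℝ) * (↑n + 1) * (↑n + 2) / (2 * (↑m + 1) * (↑m + 2)) -
        ↑n / 2 * (1 - (↑n:ℝ) ^ 2 / (↑m + 1) ^ 2) =
        (2*((m:ℝ)+1)^2*((m:ℝ)+2) + (n:ℝ)^3*((m:ℝ)+2) - (n:ℝ)*((n:ℝ)+1)*((n:ℝ)+2)*((m:ℝ)+1))
          / (2*((m:ℝ)+1)^2*((m:ℝ)+2)) := by
      field_simp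
      ring
    rw [heq]
    apply div_nonneg _ (by positivity)
    nlinarith [sq_nonneg ((m:ℝ) - n), mul_nonneg (mul_nonneg (sub_nonneg.2 h1) (sub_nonneg.2 h1)) (sub_nonneg.2 h0), mul_nonneg (sub_nonneg.2 h1) (sub_nonneg.2 h0)]
  · rw [Finset.Icc_eq_empty (by omega), Finset.sum_empty]
    have h0 : (1:ℝ) ≤ n := by exact_mod_cast hn
    have h1 : (m:ℝ) + 1 ≤ n := by exact_mod_cast h
    have hm1 : (0:ℝ) < (m:ℝ) + 1 := by positivity
    have key : ((m:ℝ)+1)^2 ≤ (n:ℝ)^2 := by nlinarith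
    have : (1:ℝ) - (n:ℝ)^2/((m:ℝ)+1)^2 ≤ 0 := by
      rw [sub_nonpos, le_div_iff₀ (by positivity)]; linarith
    nlinarith
end

section
/- Let H = [[2h, -h],[1, 0]] be a 2×2 real matrix with 0 ≤ h ≤ 1. Then for all integers t ≥ 0, the spectral (operator) norm of H^t is at most 2(t+1). -/
open Matrix

/-- Chebyshev-like pair (T n, S n) at the point `c`. -/
noncomputable def chebTS (c : ℝ) : ℕ → ℝ × ℝ
  | 0 => (1, 0)
  | n+1 => (c * (chebTS c n).1 - (1 - c^2) * (chebTS c n).2, (chebTS c n).1 + c * (chebTS c n).2)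

lemma chebTS_pell (c : ℝ) : ∀ n, ((chebTS c n).1)^2 + (1 - c^2) * ((chebTS c n).2)^2 = 1 := by
  intro n
  induction n with
  | zero => simp [chebTS]
  | succ n ih =>
    simp only [chebTS]
    nlinarith [ih]

lemma chebTS_T_abs (c : ℝ) (hc1 : c^2 ≤ 1) (n : ℕ) : |(chebTS c n).1| ≤ 1 := by
  have := chebTS_pell c n
  rw [abs_le]
  constructor <;> nlinarith [sq_nonneg ((chebTS c n).2)]

lemma chebTS_S_abs (c : ℝ) (hc0 : 0 ≤ c) (hc1 : c ≤ 1) (n : ℕ) : |(chebTS c n).2| ≤ n := by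
  induction n with
  | zero => simp [chebTS]
  | succ n ih =>
    have hT := chebTS_T_abs c (by nlinarith) n
    simp only [chebTS]
    have h1 : |(chebTS c n).1 + c * (chebTS c n).2| ≤ |(chebTS c n).1| + |c * (chebTS c n).2| :=
      abs_add_le _ _
    have h2 : |c * (chebTS c n).2| = c * |(chebTS c n).2| := by
      rw [abs_mul, abs_of_nonneg hc0]
    have h3 : c * |(chebTS c n).2| ≤ 1 * (n : ℝ) :=
      mul_le_mul hc1 ih (abs_nonneg _) zero_le_one
    push_cast
    linarith

/-- The entry sequence: q 0 = 0, q 1 = 1, q (n+2) = 2c² q(n+1) - c² q n. -/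
noncomputable def qseq (c : ℝ) : ℕ → ℝ
  | 0 => 0
  | 1 => 1
  | (n+2) => 2 * c^2 * qseq c (n+1) - c^2 * qseq c n

lemma chebTS_S_rec (c : ℝ) (n : ℕ) :
    (chebTS c (n+2)).2 = 2 * c * (chebTS c (n+1)).2 - (chebTS c n).2 := by
  simp only [chebTS]; ring

lemma qseq_eq (c : ℝ) : ∀ n, qseq c (n+1) = c^n * (chebTS c (n+1)).2 := by
  intro n
  induction n using Nat.twoStepInduction with
  | zero => simp [qseq, chebTS]
  | one =>
    show qseq c 2 = _
    have : qseq c 2 = 2 * c^2 * qseq c 1 - c^2 * qseq c 0 := rfl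
    rw [this]
    simp [qseq, chebTS]
    ring
  | more n ih1 ih2 =>
    have e1 : qseq c (n+2+1) = 2*c^2*qseq c (n+2) - c^2*qseq c (n+1) := rfl
    have ih2' : qseq c (n+2) = c^(n+1) * (chebTS c (n+1+1)).2 := ih2
    have e3 : (chebTS c (n+2+1)).2 = 2*c*(chebTS c (n+1+1)).2 - (chebTS c (n+1)).2 :=
      chebTS_S_rec c (n+1)
    rw [e1, ih2', ih1, e3]
    ring

lemma qseq_abs (c : ℝ) (hc0 : 0 ≤ c) (hc1 : c ≤ 1) (n : ℕ) : |qseq c n| ≤ n := by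
  cases n with
  | zero => simp [qseq]
  | succ n =>
    rw [qseq_eq, abs_mul, abs_of_nonneg (pow_nonneg hc0 n)]
    have h1 : c ^ n ≤ 1 := pow_le_one₀ hc0 hc1
    have h2 : |(chebTS c (n+1)).2| ≤ ((n+1 : ℕ) : ℝ) := chebTS_S_abs c hc0 hc1 (n+1)
    calc c^n * |(chebTS c (n+1)).2| ≤ 1 * ((n+1 : ℕ) : ℝ) :=
          mul_le_mul h1 h2 (abs_nonneg _) zero_le_one
      _ = ((n+1 : ℕ) : ℝ) := one_mul _

lemma matpow (c : ℝ) : ∀ n : ℕ,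
    (!![2 * c^2, -(c^2); 1, 0] : Matrix (Fin 2) (Fin 2) ℝ) ^ (n+1) =
      !![qseq c (n+2), -(c^2) * qseq c (n+1); qseq c (n+1), -(c^2) * qseq c n] := by
  intro n
  induction n with
  | zero =>
    rw [pow_one]
    norm_num [qseq]
  | succ n ih =>
    have e1 : qseq c (n+1+2) = 2*c^2*qseq c (n+2) - c^2*qseq c (n+1) := rfl
    have e2 : qseq c (n+1+1) = qseq c (n+2) := rfl
    have e3 : qseq c (n+2) = 2*c^2*qseq c (n+1) - c^2*qseq c n := rfl
    rw [pow_succ, ih]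
    ext i j
    fin_cases i <;> fin_cases j <;> simp [Matrix.mul_apply, Fin.sum_univ_two] <;>
      first
      | (rw [e1]; ring)
      | (rw [e2, e3]; ring)
      | ring

lemma opnorm2 (M : Matrix (Fin 2) (Fin 2) ℝ) (C : ℝ) (hC : 0 ≤ C)
    (hb : (M 0 0)^2 + (M 0 1)^2 + (M 1 0)^2 + (M 1 1)^2 ≤ C^2) :
    ‖(Matrix.toEuclideanCLM (𝕜 := ℝ) M : EuclideanSpace ℝ (Fin 2) →L[ℝ] EuclideanSpace ℝ (Fin 2))‖ ≤ C := by
  apply ContinuousLinearMap.opNorm_le_bound _ hC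
  intro x
  have hx : ∀ i, (Matrix.toEuclideanCLM (𝕜 := ℝ) M x) i = M.mulVec (fun j => x j) i := by
    intro i
    have := Matrix.ofLp_toEuclideanCLM (𝕜 := ℝ) M x
    exact congrFun this i
  rw [EuclideanSpace.norm_eq, EuclideanSpace.norm_eq]
  have e1 : √(∑ i, ‖x i‖^2) = √((x 0)^2 + (x 1)^2) := by
    congr 1
    simp [Fin.sum_univ_two, sq_abs]
  rw [e1]
  have e2 : √(∑ i, ‖(Matrix.toEuclideanCLM (𝕜 := ℝ) M x) i‖^2)
      = √((M 0 0 * x 0 + M 0 1 * x 1)^2 + (M 1 0 * x 0 + M 1 1 * x 1)^2) := by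
    congr 1
    simp [Fin.sum_univ_two, hx, Matrix.mulVec, dotProduct, sq_abs]
  rw [e2, ← Real.sqrt_sq hC, ← Real.sqrt_mul (by positivity)]
  apply Real.sqrt_le_sqrt
  nlinarith [sq_nonneg (M 0 0 * x 1 - M 0 1 * x 0), sq_nonneg (M 1 0 * x 1 - M 1 1 * x 0),
    sq_nonneg (x 0), sq_nonneg (x 1), sq_nonneg (M 0 0), sq_nonneg (M 0 1), sq_nonneg (M 1 0), sq_nonneg (M 1 1)]

/-- The spectral (operator 2-)norm of a real square matrix. -/
noncomputable def specNorm {n : Type*} [Fintype n] [DecidableEq n] (M : Matrix n n ℝ) : ℝ :=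
  ‖(Matrix.toEuclideanCLM (𝕜 := ℝ) M : EuclideanSpace ℝ n →L[ℝ] EuclideanSpace ℝ n)‖

/-- For H = [[2h, -h],[1,0]] with 0 ≤ h ≤ 1, ‖H^t‖ ≤ 2(t+1). -/
theorem stmt_4 (h : ℝ) (h0 : 0 ≤ h) (h1 : h ≤ 1) (t : ℕ) :
    specNorm ((!![2 * h, -h; 1, 0] : Matrix (Fin 2) (Fin 2) ℝ) ^ t) ≤ 2 * ((t : ℝ) + 1) := by
  set c := Real.sqrt h with hc
  have hc2 : c ^ 2 = h := Real.sq_sqrt h0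
  have hc0 : 0 ≤ c := Real.sqrt_nonneg h
  have hc1 : c ≤ 1 := by
    rw [hc, show (1:ℝ) = Real.sqrt 1 by simp]
    exact Real.sqrt_le_sqrt h1
  have hM : (!![2 * h, -h; 1, 0] : Matrix (Fin 2) (Fin 2) ℝ) = !![2 * c^2, -(c^2); 1, 0] := by
    rw [hc2]
  cases t with
  | zero =>
    rw [pow_zero]
    unfold specNorm
    rw [_root_.map_one]
    have hone : ‖(1 : EuclideanSpace ℝ (Fin 2) →L[ℝ] EuclideanSpace ℝ (Fin 2))‖ = 1 := norm_one
    rw [hone]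
    norm_num
  | succ n =>
    rw [hM, matpow]
    unfold specNorm
    apply opnorm2 _ _ (by positivity)
    have q0 := qseq_abs c hc0 hc1 n
    have q1 := qseq_abs c hc0 hc1 (n+1)
    have q2 := qseq_abs c hc0 hc1 (n+2)
    rw [abs_le] at q0 q1 q2
    have hcc : (0:ℝ) ≤ c^2 := sq_nonneg c
    have hcc1 : c^2 ≤ 1 := by rw [hc2]; exact h1
    simp only [Matrix.cons_val', Matrix.cons_val_zero, Matrix.empty_val',
      Matrix.cons_val_fin_one, Matrix.cons_val_one, Matrix.head_cons, Matrix.head_fin_const,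
      Matrix.of_apply]
    push_cast at q0 q1 q2 ⊢
    have b2 : qseq c (n+2)^2 ≤ ((n:ℝ)+2)^2 := by nlinarith [q2.1, q2.2]
    have b1 : qseq c (n+1)^2 ≤ ((n:ℝ)+1)^2 := by nlinarith [q1.1, q1.2]
    have b0 : qseq c n^2 ≤ ((n:ℝ))^2 := by nlinarith [q0.1, q0.2]
    have c4 : c^2 * c^2 ≤ 1 := by nlinarith
    have m1 : (-(c^2) * qseq c (n+1))^2 ≤ qseq c (n+1)^2 := by
      nlinarith [sq_nonneg (qseq c (n+1)), c4]
    have m0 : (-(c^2) * qseq c n)^2 ≤ qseq c n^2 := by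
      nlinarith [sq_nonneg (qseq c n), c4]
    have hn : (0:ℝ) ≤ (n:ℝ) := Nat.cast_nonneg n
    nlinarith [b2, b1, b0, m1, m0, hn]
end

section
/- Let M_k = [[(1+γ_k)h, -γ_k h],[1, 0]] be 2×2 real matrices where 0 ≤ h ≤ 1 and -1 ≤ γ_k ≤ 1 for k = 1,…,t. Then the spectral norm of the product M_t · M_{t-1} ⋯ M_1 is at most 2(t+1). -/
private lemma sq_lin_le (m n a b B : ℝ) (hm : m ^ 2 ≤ B ^ 2) (hn : n ^ 2 ≤ B ^ 2) :
    (m * a + n * b) ^ 2 ≤ 2 * B ^ 2 * (a ^ 2 + b ^ 2) := by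
  nlinarith [sq_nonneg (m * a - n * b), mul_nonneg (sub_nonneg.mpr hm) (sq_nonneg a),
    mul_nonneg (sub_nonneg.mpr hn) (sq_nonneg b)]

private lemma specNorm_le_of_sq_entries (M : Matrix (Fin 2) (Fin 2) ℝ) (B : ℝ) (hB : 0 ≤ B)
    (hM : ∀ i j, (M i j) ^ 2 ≤ B ^ 2) : specNorm M ≤ 2 * B := by
  rw [specNorm]
  refine ContinuousLinearMap.opNorm_le_bound _ (by positivity) (fun v => ?_)
  have happ : ∀ i, (Matrix.toEuclideanCLM (𝕜 := ℝ) M v) i = M i 0 * v 0 + M i 1 * v 1 := by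
    intro i
    have h0 : (Matrix.toEuclideanCLM (𝕜 := ℝ) M v) i = (Matrix.toLin' M (WithLp.equiv _ _ v)) i := by
      rfl
    rw [h0]
    simp [Matrix.toLin'_apply, Matrix.mulVec, Fin.sum_univ_two]
  have hnv : ‖v‖ = Real.sqrt (v 0 ^ 2 + v 1 ^ 2) := by
    rw [EuclideanSpace.norm_eq]
    simp [Fin.sum_univ_two, sq_abs, Real.norm_eq_abs]
  have hnw : ‖Matrix.toEuclideanCLM (𝕜 := ℝ) M v‖
      = Real.sqrt ((M 0 0 * v 0 + M 0 1 * v 1) ^ 2 + (M 1 0 * v 0 + M 1 1 * v 1) ^ 2) := by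
    rw [EuclideanSpace.norm_eq]
    simp [Fin.sum_univ_two, sq_abs, Real.norm_eq_abs, happ]
  rw [hnw, hnv]
  have key : (M 0 0 * v 0 + M 0 1 * v 1) ^ 2 + (M 1 0 * v 0 + M 1 1 * v 1) ^ 2
      ≤ (2 * B) ^ 2 * (v 0 ^ 2 + v 1 ^ 2) := by
    have h1 := sq_lin_le (M 0 0) (M 0 1) (v 0) (v 1) B (hM 0 0) (hM 0 1)
    have h2 := sq_lin_le (M 1 0) (M 1 1) (v 0) (v 1) B (hM 1 0) (hM 1 1)
    nlinarith
  calc Real.sqrt ((M 0 0 * v 0 + M 0 1 * v 1) ^ 2 + (M 1 0 * v 0 + M 1 1 * v 1) ^ 2)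
      ≤ Real.sqrt ((2 * B) ^ 2 * (v 0 ^ 2 + v 1 ^ 2)) := Real.sqrt_le_sqrt key
    _ = 2 * B * Real.sqrt (v 0 ^ 2 + v 1 ^ 2) := by
        rw [Real.sqrt_mul (sq_nonneg _), Real.sqrt_sq (by positivity)]

noncomputable def prodNAG (h : ℝ) (γ : ℕ → ℝ) (k : ℕ) : Matrix (Fin 2) (Fin 2) ℝ :=
  ((List.range k).map (fun j =>
    (!![(1 + γ (k - j)) * h, -(γ (k - j)) * h; 1, 0] : Matrix (Fin 2) (Fin 2) ℝ))).prod

lemma prodNAG_succ (h : ℝ) (γ : ℕ → ℝ) (k : ℕ) :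
    prodNAG h γ (k + 1)
      = !![(1 + γ (k + 1)) * h, -(γ (k + 1)) * h; 1, 0] * prodNAG h γ k := by
  rw [prodNAG, prodNAG, List.range_succ_eq_map, List.map_cons, List.prod_cons, List.map_map]
  have hmap : ((fun j =>
        (!![(1 + γ (k + 1 - j)) * h, -(γ (k + 1 - j)) * h; 1, 0] : Matrix (Fin 2) (Fin 2) ℝ))
        ∘ Nat.succ)
      = fun j => (!![(1 + γ (k - j)) * h, -(γ (k - j)) * h; 1, 0] : Matrix (Fin 2) (Fin 2) ℝ) := by
    funext j
    simp [Function.comp, Nat.succ_sub_succ]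
  rw [hmap]
  norm_num

lemma invariantNAG (h : ℝ) (h0 : 0 ≤ h) (h1 : h ≤ 1) (γ : ℕ → ℝ) :
    ∀ k, (∀ i, 1 ≤ i → i ≤ k → -1 ≤ γ i ∧ γ i ≤ 1) → ∀ c : Fin 2,
      (1 - h) * (prodNAG h γ k 0 c) ^ 2
          + h * (prodNAG h γ k 0 c - prodNAG h γ k 1 c) ^ 2 ≤ 1 ∧
      (prodNAG h γ k 0 c - prodNAG h γ k 1 c) ^ 2 ≤ 1 ∧
      (prodNAG h γ k 0 c) ^ 2 ≤ ((k : ℝ) + 1) ^ 2 ∧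
      (prodNAG h γ k 1 c) ^ 2 ≤ ((k : ℝ) + 1) ^ 2 := by
  intro k
  induction k with
  | zero =>
      intro _ c
      have hP : prodNAG h γ 0 = 1 := by simp [prodNAG]
      rw [hP]
      fin_cases c <;>
        refine ⟨?_, ?_, ?_, ?_⟩ <;> simp [Matrix.one_apply] <;> nlinarith
  | succ k ih =>
      intro hγ c
      have hγk : ∀ i, 1 ≤ i → i ≤ k → -1 ≤ γ i ∧ γ i ≤ 1 :=
        fun i hi hik => hγ i hi (Nat.le_succ_of_le hik)
      obtain ⟨hV, hd, ha, hb⟩ := ih hγk c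
      set a := prodNAG h γ k 0 c with ha_def
      set b := prodNAG h γ k 1 c with hb_def
      obtain ⟨hg1, hg2⟩ := hγ (k + 1) (Nat.le_add_left _ _) le_rfl
      set g := γ (k + 1) with hg_def
      have hgsq : g ^ 2 ≤ 1 := by nlinarith
      have e0 : prodNAG h γ (k + 1) 0 c = (1 + g) * h * a + (-g * h) * b := by
        rw [prodNAG_succ, Matrix.mul_apply, Fin.sum_univ_two]
        simp [ha_def, hb_def, hg_def]
      have e1 : prodNAG h γ (k + 1) 1 c = a := by
        rw [prodNAG_succ, Matrix.mul_apply, Fin.sum_univ_two]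
        simp [ha_def]
      rw [e0, e1]
      have hK0 : (0 : ℝ) ≤ (k : ℝ) + 1 := by positivity
      have hd' : ((1 + g) * h * a + (-g * h) * b - a) ^ 2 ≤ 1 := by
        nlinarith [mul_nonneg (mul_nonneg h0 (sub_nonneg.mpr h1)) (sq_nonneg (a + g * (a - b))),
          mul_nonneg (mul_nonneg h0 (sq_nonneg (a - b))) (sub_nonneg.mpr hgsq)]
      refine ⟨?_, hd', ?_, ?_⟩
      · nlinarith [mul_nonneg (sq_nonneg (1 - h)) (sq_nonneg a),
          mul_nonneg (mul_nonneg h0 (sq_nonneg (a - b)))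
            (sub_nonneg.mpr (by nlinarith : g ^ 2 * h ≤ 1)),
          mul_nonneg (sub_nonneg.mpr h1) (sq_nonneg a)]
      · have hgoal : ((1 + g) * h * a + (-g * h) * b) ^ 2 ≤ ((k : ℝ) + 1 + 1) ^ 2 := by
          set d' := (1 + g) * h * a + (-g * h) * b - a with hd'_def
          have hexp : (1 + g) * h * a + (-g * h) * b = a + d' := by rw [hd'_def]; ring
          rw [hexp]
          obtain ⟨ha1, ha2⟩ := abs_le_of_sq_le_sq' ha hK0
          obtain ⟨hb1, hb2⟩ := abs_le_of_sq_le_sq' (by nlinarith : d' ^ 2 ≤ (1:ℝ) ^ 2) (by norm_num : (0:ℝ) ≤ 1)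
          nlinarith
        convert hgoal using 2
        push_cast; ring
      · have : a ^ 2 ≤ ((k : ℝ) + 1 + 1) ^ 2 := by nlinarith
        convert this using 2
        push_cast; ring

/-- For M_k = [[(1+γ_k)h, -γ_k h],[1,0]] with 0 ≤ h ≤ 1 and -1 ≤ γ_k ≤ 1,
    the spectral norm of M_t ⋯ M_1 is at most 2(t+1). -/
theorem stmt_5 (t : ℕ) (h : ℝ) (h0 : 0 ≤ h) (h1 : h ≤ 1) (γ : ℕ → ℝ)
    (hγ : ∀ k, 1 ≤ k → k ≤ t → -1 ≤ γ k ∧ γ k ≤ 1) :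
    specNorm (((List.range t).map (fun j =>
        (!![(1 + γ (t - j)) * h, -(γ (t - j)) * h; 1, 0] : Matrix (Fin 2) (Fin 2) ℝ))).prod) ≤
      2 * ((t : ℝ) + 1) := by
  have hsn : (((List.range t).map (fun j =>
      (!![(1 + γ (t - j)) * h, -(γ (t - j)) * h; 1, 0] : Matrix (Fin 2) (Fin 2) ℝ))).prod)
      = prodNAG h γ t := rfl
  rw [hsn]
  refine specNorm_le_of_sq_entries _ ((t : ℝ) + 1) (by positivity) (fun i j => ?_)
  obtain ⟨-, -, hA, hB⟩ := invariantNAG h h0 h1 γ t hγ j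
  fin_cases i
  · exact hA
  · exact hB
end

section
/- Let A be a d×d real symmetric matrix with 0 ⪯ A ⪯ I and let -1 ≤ γ_k ≤ 1 for k = 1,…,t. Define the 2d×2d block matrices M_k = [[(1+γ_k)A, -γ_k A],[I, 0]]. Then the spectral norm of the product M_t ⋯ M_1 is at most 2(t+1). -/
namespace Stmt6Aux

open Matrix

variable {d : ℕ}

lemma dot_self_nonneg' (x : Fin d → ℝ) : 0 ≤ x ⬝ᵥ x :=
  Finset.sum_nonneg fun _ _ => mul_self_nonneg _

lemma dot_le_sqrt (x y : Fin d → ℝ) :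
    x ⬝ᵥ y ≤ Real.sqrt (x ⬝ᵥ x) * Real.sqrt (y ⬝ᵥ y) := by
  have h := Finset.sum_mul_sq_le_sq_mul_sq Finset.univ x y
  have hx : x ⬝ᵥ x = ∑ i, x i ^ 2 := by simp [dotProduct, sq]
  have hy : y ⬝ᵥ y = ∑ i, y i ^ 2 := by simp [dotProduct, sq]
  calc x ⬝ᵥ y ≤ |x ⬝ᵥ y| := le_abs_self _
    _ = Real.sqrt ((x ⬝ᵥ y) ^ 2) := (Real.sqrt_sq_eq_abs _).symm
    _ ≤ Real.sqrt ((x ⬝ᵥ x) * (y ⬝ᵥ y)) := by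
        apply Real.sqrt_le_sqrt; rw [hx, hy]; exact h
    _ = Real.sqrt (x ⬝ᵥ x) * Real.sqrt (y ⬝ᵥ y) := Real.sqrt_mul (dot_self_nonneg' x) _

lemma sqrt_dot_add_le (x y : Fin d → ℝ) :
    Real.sqrt ((x + y) ⬝ᵥ (x + y)) ≤ Real.sqrt (x ⬝ᵥ x) + Real.sqrt (y ⬝ᵥ y) := by
  have hxy := dot_le_sqrt x y
  have h1 : (x + y) ⬝ᵥ (x + y) ≤ (Real.sqrt (x ⬝ᵥ x) + Real.sqrt (y ⬝ᵥ y)) ^ 2 := by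
    have ex : (x + y) ⬝ᵥ (x + y) = x ⬝ᵥ x + x ⬝ᵥ y + y ⬝ᵥ x + y ⬝ᵥ y := by
      simp [add_dotProduct, dotProduct_add]; ring
    have hc : y ⬝ᵥ x = x ⬝ᵥ y := dotProduct_comm _ _
    have s1 : Real.sqrt (x ⬝ᵥ x) ^ 2 = x ⬝ᵥ x := Real.sq_sqrt (dot_self_nonneg' x)
    have s2 : Real.sqrt (y ⬝ᵥ y) ^ 2 = y ⬝ᵥ y := Real.sq_sqrt (dot_self_nonneg' y)
    nlinarith [Real.sqrt_nonneg (x ⬝ᵥ x), Real.sqrt_nonneg (y ⬝ᵥ y)]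
  calc Real.sqrt ((x + y) ⬝ᵥ (x + y))
      ≤ Real.sqrt ((Real.sqrt (x ⬝ᵥ x) + Real.sqrt (y ⬝ᵥ y)) ^ 2) := Real.sqrt_le_sqrt h1
    _ = _ := Real.sqrt_sq (by positivity)

variable (A : Matrix (Fin d) (Fin d) ℝ)

/-- The Lyapunov quantity `⟨x,(I-A)x⟩ + ⟨x-y, A(x-y)⟩` in merged form. -/
noncomputable def rq (x y : Fin d → ℝ) : ℝ :=
  x ⬝ᵥ x - 2 * (x ⬝ᵥ (A *ᵥ y)) + y ⬝ᵥ (A *ᵥ y)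

variable (hs : ∀ u w : Fin d → ℝ, u ⬝ᵥ (A *ᵥ w) = (A *ᵥ u) ⬝ᵥ w)
  (h0 : ∀ u : Fin d → ℝ, 0 ≤ u ⬝ᵥ (A *ᵥ u))
  (h1 : ∀ u : Fin d → ℝ, u ⬝ᵥ (A *ᵥ u) ≤ u ⬝ᵥ u)

include hs h0 h1 in
lemma hD1 : ∀ u : Fin d → ℝ, (A *ᵥ u) ⬝ᵥ (A *ᵥ u) ≤ u ⬝ᵥ (A *ᵥ u) := by
  intro u
  have ha := h0 (u - A *ᵥ u)
  have hb := h1 (A *ᵥ u)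
  have hsym := hs u (A *ᵥ u)
  simp only [mulVec_sub, sub_dotProduct, dotProduct_sub] at ha
  linarith

include hs h0 h1 in
lemma rq_le_init (a b : Fin d → ℝ) : rq A a b ≤ 2 * (a ⬝ᵥ a + b ⬝ᵥ b) := by
  have e1 : b ⬝ᵥ (A *ᵥ a) = a ⬝ᵥ (A *ᵥ b) := by rw [hs b a, dotProduct_comm]
  have f1 := h1 a
  have f2 := h1 b
  have f3 := h0 (a + b)
  have f4 := h0 a
  simp only [mulVec_add, add_dotProduct, dotProduct_add, e1] at f3
  unfold rq
  linarith

include hs h0 h1 in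
lemma step1 (g : ℝ) (hg : g ^ 2 ≤ 1) (a b : Fin d → ℝ) :
    rq A ((1 + g) • (A *ᵥ a) + (-g) • (A *ᵥ b)) a ≤ rq A a b := by
  have e1 : b ⬝ᵥ (A *ᵥ a) = a ⬝ᵥ (A *ᵥ b) := by rw [hs b a, dotProduct_comm]
  have c1 : (A *ᵥ a) ⬝ᵥ a = a ⬝ᵥ (A *ᵥ a) := dotProduct_comm _ _
  have c2 : (A *ᵥ b) ⬝ᵥ b = b ⬝ᵥ (A *ᵥ b) := dotProduct_comm _ _
  have c3 : (A *ᵥ a) ⬝ᵥ b = a ⬝ᵥ (A *ᵥ b) := by rw [dotProduct_comm, ← e1, dotProduct_comm]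
  have c4 : (A *ᵥ b) ⬝ᵥ a = a ⬝ᵥ (A *ᵥ b) := by rw [dotProduct_comm, ← e1]
  have c5 : (A *ᵥ b) ⬝ᵥ (A *ᵥ a) = (A *ᵥ a) ⬝ᵥ (A *ᵥ b) := dotProduct_comm _ _
  have c6 : b ⬝ᵥ a = a ⬝ᵥ b := dotProduct_comm _ _
  have hg1 : 0 ≤ 1 - g ^ 2 := by linarith
  have f1 : 0 ≤ (a - A *ᵥ a) ⬝ᵥ (a - A *ᵥ a) :=
    Finset.sum_nonneg fun _ _ => mul_self_nonneg _
  have f2 := h0 (a - b)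
  have f3' := hD1 A hs h0 h1 (a - b)
  have p2 : 0 ≤ (1 - g ^ 2) * ((a - b) ⬝ᵥ (A *ᵥ (a - b))) := mul_nonneg hg1 f2
  have p3 : 0 ≤ g ^ 2 * ((a - b) ⬝ᵥ (A *ᵥ (a - b)) - (A *ᵥ (a - b)) ⬝ᵥ (A *ᵥ (a - b))) :=
    mul_nonneg (sq_nonneg g) (by linarith)
  unfold rq
  simp only [mulVec_add, mulVec_sub, mulVec_smul, add_dotProduct, sub_dotProduct,
    smul_dotProduct, dotProduct_add, dotProduct_sub, dotProduct_smul, smul_eq_mul,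
    e1, c1, c2, c3, c4, c5, c6] at f1 p2 p3 ⊢
  nlinarith [f1, p2, p3]

include hs h0 h1 in
lemma step2 (g : ℝ) (hg : g ^ 2 ≤ 1) (a b : Fin d → ℝ) :
    ((1 + g) • (A *ᵥ a) + (-g) • (A *ᵥ b) - a) ⬝ᵥ ((1 + g) • (A *ᵥ a) + (-g) • (A *ᵥ b) - a)
      ≤ rq A a b := by
  have e1 : b ⬝ᵥ (A *ᵥ a) = a ⬝ᵥ (A *ᵥ b) := by rw [hs b a, dotProduct_comm]
  have c1 : (A *ᵥ a) ⬝ᵥ a = a ⬝ᵥ (A *ᵥ a) := dotProduct_comm _ _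
  have c2 : (A *ᵥ b) ⬝ᵥ b = b ⬝ᵥ (A *ᵥ b) := dotProduct_comm _ _
  have c3 : (A *ᵥ a) ⬝ᵥ b = a ⬝ᵥ (A *ᵥ b) := by rw [dotProduct_comm, ← e1, dotProduct_comm]
  have c4 : (A *ᵥ b) ⬝ᵥ a = a ⬝ᵥ (A *ᵥ b) := by rw [dotProduct_comm, ← e1]
  have c5 : (A *ᵥ b) ⬝ᵥ (A *ᵥ a) = (A *ᵥ a) ⬝ᵥ (A *ᵥ b) := dotProduct_comm _ _
  have c6 : b ⬝ᵥ a = a ⬝ᵥ b := dotProduct_comm _ _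
  have hg1 : 0 ≤ 1 - g ^ 2 := by linarith
  have f2 := h0 (a - b)
  have f4 := hD1 A hs h0 h1 ((1 + g) • a + (-g) • b)
  have p2 : 0 ≤ (1 - g ^ 2) * ((a - b) ⬝ᵥ (A *ᵥ (a - b))) := mul_nonneg hg1 f2
  unfold rq
  simp only [mulVec_add, mulVec_sub, mulVec_smul, add_dotProduct, sub_dotProduct,
    smul_dotProduct, dotProduct_add, dotProduct_sub, dotProduct_smul, smul_eq_mul,
    e1, c1, c2, c3, c4, c5, c6] at f4 p2 ⊢
  nlinarith [f4, p2]

include hs h0 h1 in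
lemma key (l : List ℝ) (hl : ∀ g ∈ l, g ^ 2 ≤ 1) (v1 v0 : Fin d → ℝ) :
    ∃ a b : Fin d → ℝ,
      ((l.map (fun g => fromBlocks ((1 + g) • A) (-g • A)
          (1 : Matrix (Fin d) (Fin d) ℝ) 0)).prod) *ᵥ (Sum.elim v1 v0) = Sum.elim a b
      ∧ rq A a b ≤ rq A v1 v0
      ∧ Real.sqrt (a ⬝ᵥ a) ≤ max (Real.sqrt (v1 ⬝ᵥ v1)) (Real.sqrt (v0 ⬝ᵥ v0))
          + l.length * Real.sqrt (rq A v1 v0)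
      ∧ Real.sqrt (b ⬝ᵥ b) ≤ max (Real.sqrt (v1 ⬝ᵥ v1)) (Real.sqrt (v0 ⬝ᵥ v0))
          + l.length * Real.sqrt (rq A v1 v0) := by
  induction l with
  | nil =>
      exact ⟨v1, v0, by simp, le_refl _, by simp [le_max_left], by simp [le_max_right]⟩
  | cons g l ih =>
      obtain ⟨a, b, hab, hrq, ha, hb⟩ := ih (fun g' hg' => hl g' (List.mem_cons_of_mem _ hg'))
      have hg : g ^ 2 ≤ 1 := hl g List.mem_cons_self
      have hR0 : 0 ≤ Real.sqrt (rq A v1 v0) := Real.sqrt_nonneg _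
      have hL : (0:ℝ) ≤ l.length := by positivity
      refine ⟨(1 + g) • (A *ᵥ a) + (-g) • (A *ᵥ b), a, ?_, ?_, ?_, ?_⟩
      · rw [List.map_cons, List.prod_cons, ← Matrix.mulVec_mulVec, hab, fromBlocks_mulVec]
        simp [smul_mulVec, Matrix.neg_mulVec]
      · exact le_trans (step1 A hs h0 h1 g hg a b) hrq
      · set a' : Fin d → ℝ := (1 + g) • (A *ᵥ a) + (-g) • (A *ᵥ b) with ha'
        have t1 : Real.sqrt (a' ⬝ᵥ a') ≤ Real.sqrt (a ⬝ᵥ a)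
            + Real.sqrt ((a' - a) ⬝ᵥ (a' - a)) := by
          have h := sqrt_dot_add_le a (a' - a)
          rwa [show a + (a' - a) = a' from by abel] at h
        have t2 : Real.sqrt ((a' - a) ⬝ᵥ (a' - a)) ≤ Real.sqrt (rq A v1 v0) :=
          Real.sqrt_le_sqrt (le_trans (step2 A hs h0 h1 g hg a b) hrq)
        have t3 : Real.sqrt (a' ⬝ᵥ a') ≤ max (Real.sqrt (v1 ⬝ᵥ v1)) (Real.sqrt (v0 ⬝ᵥ v0))
            + l.length * Real.sqrt (rq A v1 v0) + Real.sqrt (rq A v1 v0) := by linarith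
        refine le_trans t3 ?_
        simp only [List.length_cons]
        push_cast
        linarith
      · refine le_trans ha ?_
        simp only [List.length_cons]
        push_cast
        nlinarith [hR0]

end Stmt6Aux

open Matrix Stmt6Aux in
/-- For a d×d real symmetric matrix A with 0 ⪯ A ⪯ I, coefficients -1 ≤ γ_k ≤ 1 and
    block matrices M_k = [[(1+γ_k)A, -γ_k A],[I, 0]], the spectral norm of
    M_t ⋯ M_1 is at most 2(t+1). -/
theorem stmt_6 {d : ℕ} (t : ℕ) (A : Matrix (Fin d) (Fin d) ℝ)
    (hA : A.IsSymm) (hA0 : A.PosSemidef) (hA1 : ((1 : Matrix (Fin d) (Fin d) ℝ) - A).PosSemidef)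
    (γ : ℕ → ℝ) (hγ : ∀ k, 1 ≤ k → k ≤ t → -1 ≤ γ k ∧ γ k ≤ 1) :
    specNorm (((List.range t).map (fun j =>
        (Matrix.fromBlocks ((1 + γ (t - j)) • A) (-(γ (t - j)) • A) 1 0 :
          Matrix (Fin d ⊕ Fin d) (Fin d ⊕ Fin d) ℝ))).prod) ≤
      2 * ((t : ℝ) + 1) := by
  classical
  have hs : ∀ u w : Fin d → ℝ, u ⬝ᵥ (A *ᵥ w) = (A *ᵥ u) ⬝ᵥ w := by
    intro u w
    rw [Matrix.dotProduct_mulVec]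
    congr 1
    conv_lhs => rw [show A = Aᵀ from hA.symm]
    rw [Matrix.vecMul_transpose]
  have h0 : ∀ u : Fin d → ℝ, 0 ≤ u ⬝ᵥ (A *ᵥ u) := by
    intro u; simpa using hA0.dotProduct_mulVec_nonneg u
  have h1 : ∀ u : Fin d → ℝ, u ⬝ᵥ (A *ᵥ u) ≤ u ⬝ᵥ u := by
    intro u
    have := hA1.dotProduct_mulVec_nonneg u
    simp only [Matrix.sub_mulVec, Matrix.one_mulVec, dotProduct_sub, star_trivial] at this
    linarith
  set l : List ℝ := (List.range t).map (fun j => γ (t - j)) with hldef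
  have hlist : ((List.range t).map (fun j =>
      (Matrix.fromBlocks ((1 + γ (t - j)) • A) (-(γ (t - j)) • A) 1 0 :
        Matrix (Fin d ⊕ Fin d) (Fin d ⊕ Fin d) ℝ))) =
      l.map (fun g => Matrix.fromBlocks ((1 + g) • A) (-g • A) 1 0) := by
    rw [hldef, List.map_map]
    rfl
  have hl : ∀ g ∈ l, g ^ 2 ≤ 1 := by
    intro g hg
    rw [hldef, List.mem_map] at hg
    obtain ⟨j, hj, rfl⟩ := hg
    have hj' : j < t := List.mem_range.mp hj
    obtain ⟨hg1, hg2⟩ := hγ (t - j) (by omega) (by omega)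
    nlinarith
  have hlen : (l.length : ℝ) = t := by rw [hldef]; simp
  rw [hlist]
  unfold specNorm
  apply ContinuousLinearMap.opNorm_le_bound _ (by positivity)
  intro v
  set w : (Fin d ⊕ Fin d) → ℝ := (WithLp.equiv 2 _) v with hw
  set v1 : Fin d → ℝ := w ∘ Sum.inl with hv1
  set v0 : Fin d → ℝ := w ∘ Sum.inr with hv0
  obtain ⟨a, b, hab, hrq, ha, hb⟩ := key A hs h0 h1 l hl v1 v0
  rw [hv1, hv0, Sum.elim_comp_inl_inr] at hab
  rw [hlen] at ha hb
  set P : Matrix (Fin d ⊕ Fin d) (Fin d ⊕ Fin d) ℝ :=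
    (l.map (fun g => Matrix.fromBlocks ((1 + g) • A) (-g • A) 1 0)).prod with hP
  have hTv : (Matrix.toEuclideanCLM (𝕜 := ℝ) P) v = (WithLp.equiv 2 _).symm (Sum.elim a b) := by
    have hv : v = (WithLp.equiv 2 _).symm w := by rw [hw]; simp
    rw [hv, WithLp.equiv_symm_apply, Matrix.toEuclideanCLM_toLp, hab]
  have hnorm1 : ‖(Matrix.toEuclideanCLM (𝕜 := ℝ) P) v‖ = Real.sqrt (a ⬝ᵥ a + b ⬝ᵥ b) := by
    rw [hTv, EuclideanSpace.norm_eq]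
    congr 1
    rw [Fintype.sum_sum_type]
    simp [WithLp.equiv_symm_apply, dotProduct, Real.norm_eq_abs, sq_abs, sq]
  have hnorm2 : ‖v‖ = Real.sqrt (v1 ⬝ᵥ v1 + v0 ⬝ᵥ v0) := by
    rw [EuclideanSpace.norm_eq]
    congr 1
    rw [Fintype.sum_sum_type]
    simp [hv1, hv0, hw, Function.comp,
      dotProduct, Real.norm_eq_abs, sq_abs, sq]
  rw [hnorm1, hnorm2]
  set S : ℝ := Real.sqrt (v1 ⬝ᵥ v1 + v0 ⬝ᵥ v0) with hS
  set N : ℝ := max (Real.sqrt (v1 ⬝ᵥ v1)) (Real.sqrt (v0 ⬝ᵥ v0)) with hN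
  set R : ℝ := Real.sqrt (rq A v1 v0) with hR
  have hS0 : 0 ≤ S := Real.sqrt_nonneg _
  have hN0 : 0 ≤ N := le_trans (Real.sqrt_nonneg _) (le_max_left _ _)
  have hR0 : 0 ≤ R := Real.sqrt_nonneg _
  have hNS : N ≤ S := by
    apply max_le
    · exact Real.sqrt_le_sqrt (by linarith [dot_self_nonneg' v0])
    · exact Real.sqrt_le_sqrt (by linarith [dot_self_nonneg' v1])
  have hrqinit : rq A v1 v0 ≤ 2 * (v1 ⬝ᵥ v1 + v0 ⬝ᵥ v0) := rq_le_init A hs h0 h1 v1 v0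
  have hRS : R ≤ Real.sqrt 2 * S := by
    rw [hR, hS, ← Real.sqrt_mul (by norm_num : (0:ℝ) ≤ 2)]
    exact Real.sqrt_le_sqrt hrqinit
  have sqrt2 : Real.sqrt 2 * Real.sqrt 2 = 2 := Real.mul_self_sqrt (by norm_num)
  have sqrt2le : Real.sqrt 2 ≤ 2 := by nlinarith [Real.sqrt_nonneg 2]
  have ht0 : (0:ℝ) ≤ (t : ℝ) := by positivity
  have ha2 : a ⬝ᵥ a ≤ (N + (t : ℝ) * R) ^ 2 := by
    have h' := pow_le_pow_left₀ (Real.sqrt_nonneg (a ⬝ᵥ a)) ha 2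
    rwa [Real.sq_sqrt (dot_self_nonneg' a)] at h'
  have hb2 : b ⬝ᵥ b ≤ (N + (t : ℝ) * R) ^ 2 := by
    have h' := pow_le_pow_left₀ (Real.sqrt_nonneg (b ⬝ᵥ b)) hb 2
    rwa [Real.sq_sqrt (dot_self_nonneg' b)] at h'
  have h3 : Real.sqrt (a ⬝ᵥ a + b ⬝ᵥ b) ≤ Real.sqrt (2 * (N + (t : ℝ) * R) ^ 2) :=
    Real.sqrt_le_sqrt (by linarith)
  have h4 : Real.sqrt (2 * (N + (t : ℝ) * R) ^ 2) = Real.sqrt 2 * (N + (t : ℝ) * R) := by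
    rw [Real.sqrt_mul (by norm_num : (0:ℝ) ≤ 2), Real.sqrt_sq (by positivity)]
  have e1 : Real.sqrt 2 * N ≤ 2 * S :=
    le_trans (mul_le_mul_of_nonneg_right sqrt2le hN0) (by linarith)
  have e2 : Real.sqrt 2 * R ≤ 2 * S := by
    calc Real.sqrt 2 * R ≤ Real.sqrt 2 * (Real.sqrt 2 * S) :=
          mul_le_mul_of_nonneg_left hRS (Real.sqrt_nonneg 2)
      _ = 2 * S := by rw [← mul_assoc, sqrt2]
  have e3 : (t : ℝ) * (Real.sqrt 2 * R) ≤ (t : ℝ) * (2 * S) :=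
    mul_le_mul_of_nonneg_left e2 ht0
  have h5 : Real.sqrt 2 * (N + (t : ℝ) * R) ≤ 2 * ((t : ℝ) + 1) * S := by nlinarith [e1, e3]
  linarith [h3, h4.le, h5]
end

section
/- Define γ = 0.9 and the 2×2 matrices B = [[0,0],[1,0]] and C = [[1+γ, -γ],[1, 0]] = [[1.9, -0.9],[1, 0]]. Then B·C·C = [[0,0],[2.71, -1.71]], and for every positive integer m the spectral norm of (B·C·C)^m is at least 1.15^{3m}. -/
lemma prod_eq_s7 :
    (!![0, 0; 1, 0] : Matrix (Fin 2) (Fin 2) ℝ) * !![1.9, -0.9; 1, 0] * !![1.9, -0.9; 1, 0] =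
      !![0, 0; 2.71, -1.71] := by
  ext i j
  fin_cases i <;> fin_cases j <;> norm_num [Matrix.mul_fin_two]

lemma pow_A (m : ℕ) (hm : 1 ≤ m) :
    (!![0, 0; 2.71, -1.71] : Matrix (Fin 2) (Fin 2) ℝ) ^ m
      = ((-1.71 : ℝ) ^ (m - 1)) • !![0, 0; 2.71, -1.71] := by
  induction m with
  | zero => omega
  | succ k ih =>
    rcases Nat.eq_or_lt_of_le hm with h | h
    · simp [← h]
    · have hk : 1 ≤ k := by omega
      rw [pow_succ, ih hk]
      have : k + 1 - 1 = (k - 1) + 1 := by omega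
      rw [this, pow_succ]
      have hAA : (!![0, 0; 2.71, -1.71] : Matrix (Fin 2) (Fin 2) ℝ) * !![0, 0; 2.71, -1.71]
          = (-1.71 : ℝ) • !![0, 0; 2.71, -1.71] := by
        ext i j
        fin_cases i <;> fin_cases j <;> norm_num [Matrix.mul_fin_two]
      rw [Matrix.smul_mul, hAA, smul_smul]

lemma specNorm_A_ge : (2.71 : ℝ) ≤ specNorm (!![0, 0; 2.71, -1.71] : Matrix (Fin 2) (Fin 2) ℝ) := by
  set f := (Matrix.toEuclideanCLM (𝕜 := ℝ) (!![0, 0; 2.71, -1.71] : Matrix (Fin 2) (Fin 2) ℝ))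
  set x : EuclideanSpace ℝ (Fin 2) := (WithLp.equiv 2 (Fin 2 → ℝ)).symm ![1, 0]
  have hx : ‖x‖ = 1 := by
    simp [x, EuclideanSpace.norm_eq, Fin.sum_univ_two]
  have hfx : f x = (WithLp.equiv 2 (Fin 2 → ℝ)).symm ![0, 2.71] := by
    rw [show f x = _ from Matrix.toEuclideanCLM_toLp _ ![1, 0]]
    congr 1
    simp [Matrix.toLin'_apply, Matrix.mulVec, dotProduct, Fin.sum_univ_two]
    ext i
    fin_cases i <;> norm_num [Matrix.vecHead, Matrix.vecTail]
  have h1 : ‖f x‖ = 2.71 := by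
    rw [hfx]
    simp [EuclideanSpace.norm_eq, Fin.sum_univ_two]
    rw [Real.sqrt_eq_iff_eq_sq] <;> norm_num
  have := f.le_opNorm x
  rw [hx, mul_one, h1] at this
  exact this

/-- With B = [[0,0],[1,0]] and C = [[1.9,-0.9],[1,0]] we have
    B·C·C = [[0,0],[2.71,-1.71]] and ‖(B·C·C)^m‖ ≥ 1.15^{3m} for all m ≥ 1. -/
theorem stmt_7 :
    (!![0, 0; 1, 0] : Matrix (Fin 2) (Fin 2) ℝ) * !![1.9, -0.9; 1, 0] * !![1.9, -0.9; 1, 0] =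
      !![0, 0; 2.71, -1.71] ∧
    ∀ m : ℕ, 1 ≤ m →
      (1.15 : ℝ) ^ (3 * m) ≤
        specNorm (((!![0, 0; 1, 0] : Matrix (Fin 2) (Fin 2) ℝ) * !![1.9, -0.9; 1, 0] *
          !![1.9, -0.9; 1, 0]) ^ m) := by
  refine ⟨prod_eq_s7, fun m hm => ?_⟩
  rw [prod_eq_s7, pow_A m hm]
  have hsmul : specNorm (((-1.71 : ℝ) ^ (m - 1)) • (!![0, 0; 2.71, -1.71] : Matrix (Fin 2) (Fin 2) ℝ))
      = |(-1.71 : ℝ) ^ (m - 1)| * specNorm (!![0, 0; 2.71, -1.71] : Matrix (Fin 2) (Fin 2) ℝ) := by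
    unfold specNorm
    set_option synthInstance.maxHeartbeats 1000000 in
    rw [map_smul]
    rw [norm_smul ((-1.71:ℝ) ^ (m - 1)) (Matrix.toEuclideanCLM (𝕜 := ℝ) (!![0, 0; 2.71, -1.71] : Matrix (Fin 2) (Fin 2) ℝ)), Real.norm_eq_abs]
  rw [hsmul, abs_pow, abs_neg, abs_of_nonneg (by norm_num : (0:ℝ) ≤ 1.71)]
  have key : (1.15 : ℝ) ^ (3 * m) ≤ (1.71 : ℝ) ^ (m - 1) * 2.71 := by
    have h1 : (1.15 : ℝ) ^ (3 * m) = ((1.15 : ℝ) ^ 3) ^ m := by rw [← pow_mul]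
    rw [h1, show m = (m - 1) + 1 by omega, pow_succ]
    have h2 : ((1.15:ℝ)^3) ^ (m-1) ≤ (1.71:ℝ) ^ (m-1) :=
      pow_le_pow_left₀ (by positivity) (by norm_num) _
    have h3 : ((1.15:ℝ)^3) ≤ 2.71 := by norm_num
    exact mul_le_mul h2 h3 (by positivity) (by positivity)
  calc (1.15 : ℝ) ^ (3 * m) ≤ (1.71 : ℝ) ^ (m - 1) * 2.71 := key
    _ ≤ (1.71 : ℝ) ^ (m - 1) * specNorm !![0, 0; 2.71, -1.71] :=
        mul_le_mul_of_nonneg_left specNorm_A_ge (by positivity)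
end

section
/- Let f : ℝ^d → ℝ be a convex G-Lipschitz function, Ω ⊆ ℝ^d a nonempty closed convex set, and consider projected subgradient descent x_{t+1} = Π_Ω[x_t - η g(x_t)] where g(x_t) is any subgradient of f at x_t. If two such trajectories start at points x_0, x̃_0 with ‖x_0 - x̃_0‖ ≤ ε, then for every t ≥ 0, ‖x_t - x̃_t‖ ≤ ε + 2Gη√t. -/
open scoped RealInnerProductSpace

/-- Initialization stability of projected subgradient descent on a convex G-Lipschitz
    function: ‖x_t - x̃_t‖ ≤ ε + 2Gη√t. Here `P` is the Euclidean projection onto the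
    nonempty closed convex set Ω and `g x` is a subgradient of f at x. -/
theorem stmt_11 {d : ℕ} (G η ε : ℝ) (hG : 0 < G) (hη : 0 < η)
    (f : EuclideanSpace ℝ (Fin d) → ℝ)
    (hconv : ConvexOn ℝ Set.univ f)
    (hlipf : ∀ u v, |f u - f v| ≤ G * ‖u - v‖)
    (Ω : Set (EuclideanSpace ℝ (Fin d)))
    (hΩne : Ω.Nonempty) (hΩc : IsClosed Ω) (hΩconv : Convex ℝ Ω)
    (P : EuclideanSpace ℝ (Fin d) → EuclideanSpace ℝ (Fin d))
    (hPmem : ∀ x, P x ∈ Ω)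
    (hPproj : ∀ x, ∀ y ∈ Ω, ‖x - P x‖ ≤ ‖x - y‖)
    (g : EuclideanSpace ℝ (Fin d) → EuclideanSpace ℝ (Fin d))
    (hsub : ∀ x y, f x + ⟪g x, y - x⟫ ≤ f y)
    (x xt : ℕ → EuclideanSpace ℝ (Fin d))
    (hx : ∀ t : ℕ, x (t + 1) = P (x t - η • g (x t)))
    (hxt : ∀ t : ℕ, xt (t + 1) = P (xt t - η • g (xt t)))
    (h0 : ‖x 0 - xt 0‖ ≤ ε) :
    ∀ t : ℕ, ‖x t - xt t‖ ≤ ε + 2 * G * η * Real.sqrt t := by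
  -- variational inequality
  have hvar : ∀ a, ∀ y ∈ Ω, ⟪a - P a, y - P a⟫ ≤ 0 := by
    intro a y hy
    have heq : ‖a - P a‖ = ⨅ w : Ω, ‖a - w‖ := by
      haveI : Nonempty Ω := hΩne.to_subtype
      apply le_antisymm
      · exact le_ciInf fun w => hPproj a w w.2
      · exact ciInf_le ⟨0, fun _ ⟨w, h⟩ => h ▸ norm_nonneg _⟩ (⟨P a, hPmem a⟩ : Ω)
    exact (norm_eq_iInf_iff_real_inner_le_zero hΩconv (hPmem a)).1 heq y hy
  -- nonexpansive
  have hnonexp : ∀ a b, ‖P a - P b‖ ≤ ‖a - b‖ := by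
    intro a b
    have h1 := hvar a (P b) (hPmem b)
    have h2 := hvar b (P a) (hPmem a)
    have key : ‖P a - P b‖ ^ 2 ≤ ⟪a - b, P a - P b⟫ := by
      have e1 : ⟪a - P a, P b - P a⟫ = ⟪a, P b - P a⟫ - ⟪P a, P b - P a⟫ := by
        rw [inner_sub_left]
      have e2 : ⟪b - P b, P a - P b⟫ = ⟪b, P a - P b⟫ - ⟪P b, P a - P b⟫ := by
        rw [inner_sub_left]
      have e3 : ⟪a - b, P a - P b⟫ = ⟪a, P a - P b⟫ - ⟪b, P a - P b⟫ := by
        rw [inner_sub_left]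
      have e4 : ‖P a - P b‖ ^ 2 = ⟪P a, P a - P b⟫ - ⟪P b, P a - P b⟫ := by
        rw [← inner_sub_left, real_inner_self_eq_norm_sq]
      have e5 : ⟪a, P b - P a⟫ = -⟪a, P a - P b⟫ := by
        rw [← inner_neg_right]; rw [neg_sub]
      have e6 : ⟪P a, P b - P a⟫ = -⟪P a, P a - P b⟫ := by
        rw [← inner_neg_right]; rw [neg_sub]
      nlinarith [h1, h2]
    have cs : ⟪a - b, P a - P b⟫ ≤ ‖a - b‖ * ‖P a - P b‖ := real_inner_le_norm _ _
    rcases eq_or_ne (P a) (P b) with h | h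
    · simp [h]
    · have hpos : 0 < ‖P a - P b‖ := by
        rw [norm_pos_iff]; exact sub_ne_zero_of_ne h
      nlinarith
  -- subgradient norm bound
  have hgnorm : ∀ u, ‖g u‖ ≤ G := by
    intro u
    have h1 := hsub u (u + g u)
    have h2 := hlipf (u + g u) u
    have e : (u + g u) - u = g u := by abel
    rw [e] at h1 h2
    rw [real_inner_self_eq_norm_sq] at h1
    rcases eq_or_ne (g u) 0 with h | h
    · simp [h]; exact hG.le
    · have hpos : 0 < ‖g u‖ := norm_pos_iff.2 h
      have := abs_le.1 h2
      nlinarith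
  -- monotonicity
  have hmono : ∀ u v, 0 ≤ ⟪g u - g v, u - v⟫ := by
    intro u v
    have h1 := hsub u v
    have h2 := hsub v u
    have e1 : ⟪g u - g v, u - v⟫ = ⟪g u, u - v⟫ - ⟪g v, u - v⟫ := inner_sub_left _ _ _
    have e2 : ⟪g u, v - u⟫ = -⟪g u, u - v⟫ := by
      rw [← inner_neg_right]; rw [neg_sub]
    have e3 : ⟪g v, u - v⟫ = ⟪g v, u - v⟫ := rfl
    linarith [h1, h2, e1.le, e1.ge]
  -- one-step recursion on squares
  have hstep : ∀ t, ‖x (t+1) - xt (t+1)‖ ^ 2 ≤ ‖x t - xt t‖ ^ 2 + 4 * η^2 * G^2 := by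
    intro t
    have h1 : ‖x (t+1) - xt (t+1)‖ ≤ ‖(x t - η • g (x t)) - (xt t - η • g (xt t))‖ := by
      rw [hx t, hxt t]; exact hnonexp _ _
    set u := x t; set v := xt t
    have e : (u - η • g u) - (v - η • g v) = (u - v) - η • (g u - g v) := by
      rw [smul_sub]; abel
    rw [e] at h1
    have hsq : ‖(u - v) - η • (g u - g v)‖ ^ 2
        = ‖u - v‖ ^ 2 - 2 * η * ⟪g u - g v, u - v⟫ + η^2 * ‖g u - g v‖ ^ 2 := by
      rw [norm_sub_sq_real, norm_smul, real_inner_smul_right, real_inner_comm]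
      simp [abs_of_pos hη]; ring
    have hgb : ‖g u - g v‖ ≤ 2 * G := by
      calc ‖g u - g v‖ ≤ ‖g u‖ + ‖g v‖ := norm_sub_le _ _
        _ ≤ 2 * G := by linarith [hgnorm u, hgnorm v]
    have hmon := hmono u v
    have hn1 : ‖x (t+1) - xt (t+1)‖ ^ 2 ≤ ‖(u - v) - η • (g u - g v)‖ ^ 2 := by
      apply sq_le_sq' _ h1
      linarith [norm_nonneg (x (t+1) - xt (t+1)), norm_nonneg ((u - v) - η • (g u - g v))]
    have hgb2 : ‖g u - g v‖ ^ 2 ≤ 4 * G ^ 2 := by nlinarith [norm_nonneg (g u - g v)]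
    nlinarith [mul_le_mul_of_nonneg_left hgb2 (sq_nonneg η)]
  -- induction
  have hind : ∀ t : ℕ, ‖x t - xt t‖ ^ 2 ≤ ‖x 0 - xt 0‖ ^ 2 + 4 * η^2 * G^2 * t := by
    intro t
    induction t with
    | zero => simp
    | succ n ih =>
      have := hstep n
      push_cast
      push_cast at ih
      nlinarith
  intro t
  have hε : 0 ≤ ε := le_trans (norm_nonneg _) h0
  have hst : 0 ≤ Real.sqrt t := Real.sqrt_nonneg _
  have hsq : Real.sqrt t ^ 2 = (t : ℝ) := Real.sq_sqrt (Nat.cast_nonneg t)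
  have key : ‖x t - xt t‖ ^ 2 ≤ (ε + 2 * G * η * Real.sqrt t) ^ 2 := by
    have := hind t
    have h0sq : ‖x 0 - xt 0‖ ^ 2 ≤ ε ^ 2 := pow_le_pow_left₀ (norm_nonneg _) h0 2
    have hcross : 0 ≤ 2 * (2 * G * η * Real.sqrt t) * ε := by positivity
    have hc2 : (2 * G * η * Real.sqrt t) ^ 2 = 4 * η ^ 2 * G ^ 2 * (t : ℝ) := by
      rw [mul_pow, hsq]; ring
    nlinarith [hc2]
  have hrhs : 0 ≤ ε + 2 * G * η * Real.sqrt t := by positivity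
  nlinarith [norm_nonneg (x t - xt t)]
end

section
/- Let f : ℝ → ℝ be convex and β-smooth with ∇f(x) < -G/2 for all x ∈ ℝ, where G > 0. Let (x_t, y_t) be the NAG iterates with step size η ≤ 1/β, γ_t = (t-1)/(t+2), started at arbitrary x_0 = y_0. Then for every t ≥ 1, y_t ≥ y_{t-1} + ηG/2, and moreover if t > ⌈20/(ηβ)⌉ then y_t > y_{t-1} + 2G/β. -/
set_option maxHeartbeats 800000


/-- For NAG with step size η ≤ 1/β on a convex β-smooth f : ℝ → ℝ whose derivative is
    everywhere below -G/2: y_t ≥ y_{t-1} + ηG/2 for t ≥ 1, and for t > ⌈20/(ηβ)⌉ even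
    y_t > y_{t-1} + 2G/β. -/
theorem stmt_13 (β η G : ℝ) (hβ : 0 < β) (hη : 0 < η) (hηβ : η ≤ 1 / β) (hG : 0 < G)
    (f : ℝ → ℝ) (hconv : ConvexOn ℝ Set.univ f) (hdiff : Differentiable ℝ f)
    (hsmooth : ∀ a b : ℝ, |deriv f a - deriv f b| ≤ β * |a - b|)
    (hneg : ∀ w : ℝ, deriv f w < -G / 2)
    (x y : ℕ → ℝ) (hy0 : y 0 = x 0)
    (hx : ∀ t : ℕ, 1 ≤ t → x t = y (t - 1) - η * deriv f (y (t - 1)))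
    (hy : ∀ t : ℕ, 1 ≤ t →
      y t = x t + (((t : ℝ) - 1) / ((t : ℝ) + 2)) * (x t - x (t - 1))) :
    ∀ t : ℕ, 1 ≤ t →
      y (t - 1) + η * G / 2 ≤ y t ∧
      (⌈20 / (η * β)⌉₊ < t → y (t - 1) + 2 * G / β < y t) := by
  set m : ℕ → ℝ := fun t => (((t : ℝ) - 1) / ((t : ℝ) + 2)) * (x t - x (t - 1)) with hm
  -- key momentum lower bound
  have key : ∀ t : ℕ, 1 ≤ t →
      η * G * ((t : ℝ) - 1) ^ 2 / (8 * ((t : ℝ) + 2)) ≤ m t := by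
    intro t ht
    induction t, ht using Nat.le_induction with
    | base => simp [hm]
    | succ t ht ih =>
      have ht1 : (1 : ℝ) ≤ (t : ℝ) := by exact_mod_cast ht
      have hxt : x (t + 1) = y t - η * deriv f (y t) := by
        have := hx (t + 1) (by omega)
        simpa using this
      have hyt : y t = x t + m t := by
        have := hy t ht
        rw [this]
      have hder : deriv f (y t) < -G / 2 := hneg _
      have hmt1 : m (t + 1) = ((t : ℝ) / ((t : ℝ) + 3)) * (m t - η * deriv f (y t)) := by
        show (((t + 1 : ℕ) : ℝ) - 1) / (((t + 1 : ℕ) : ℝ) + 2) * (x (t + 1) - x (t + 1 - 1))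
            = ((t : ℝ) / ((t : ℝ) + 3)) * (m t - η * deriv f (y t))
        have : x (t + 1) - x (t + 1 - 1) = m t - η * deriv f (y t) := by
          simp only [Nat.add_sub_cancel]
          rw [hxt, hyt]; ring
        rw [this]
        push_cast
        ring_nf
      have hpos3 : (0 : ℝ) < (t : ℝ) + 3 := by linarith
      have hpos2 : (0 : ℝ) < (t : ℝ) + 2 := by linarith
      have hstep : ((t : ℝ) / ((t : ℝ) + 3)) *
          (η * G * ((t : ℝ) - 1) ^ 2 / (8 * ((t : ℝ) + 2)) + η * G / 2)
          ≤ m (t + 1) := by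
        rw [hmt1]
        have h1 : η * G * ((t : ℝ) - 1) ^ 2 / (8 * ((t : ℝ) + 2)) + η * G / 2
            ≤ m t - η * deriv f (y t) := by
          have h2 : η * deriv f (y t) < η * (-G / 2) := by
            exact (mul_lt_mul_iff_right₀ hη).mpr hder
          nlinarith [ih]
        have h3 : (0 : ℝ) ≤ (t : ℝ) / ((t : ℝ) + 3) := by positivity
        exact mul_le_mul_of_nonneg_left h1 h3
      refine le_trans ?_ hstep
      have hdiff9 : ((t : ℝ) / ((t : ℝ) + 3)) *
          (η * G * ((t : ℝ) - 1) ^ 2 / (8 * ((t : ℝ) + 2)) + η * G / 2)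
          - η * G * (((t + 1 : ℕ) : ℝ) - 1) ^ 2 / (8 * (((t + 1 : ℕ) : ℝ) + 2))
          = η * G * 9 * (t : ℝ) / (8 * ((t : ℝ) + 2) * ((t : ℝ) + 3)) := by
        push_cast
        field_simp
        ring
      have h9 : (0 : ℝ) ≤ η * G * 9 * (t : ℝ) / (8 * ((t : ℝ) + 2) * ((t : ℝ) + 3)) := by
        positivity
      linarith [hdiff9, h9]
  intro t ht
  have ht1 : (1 : ℝ) ≤ (t : ℝ) := by exact_mod_cast ht
  have hpos2 : (0 : ℝ) < (t : ℝ) + 2 := by linarith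
  have hyt : y t = y (t - 1) - η * deriv f (y (t - 1)) + m t := by
    have h1 := hy t ht
    have h2 := hx t ht
    rw [h1, h2]
    show y (t - 1) - η * deriv f (y (t - 1)) +
        (((t : ℝ) - 1) / ((t : ℝ) + 2)) *
        (y (t - 1) - η * deriv f (y (t - 1)) - x (t - 1))
        = y (t - 1) - η * deriv f (y (t - 1)) +
        (((t : ℝ) - 1) / ((t : ℝ) + 2)) * (x t - x (t - 1))
    rw [h2]
  have hder : deriv f (y (t - 1)) < -G / 2 := hneg _
  have hder' : η * G / 2 < -(η * deriv f (y (t - 1))) := by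
    have := (mul_lt_mul_iff_right₀ hη).mpr hder
    nlinarith
  have hφ : η * G * ((t : ℝ) - 1) ^ 2 / (8 * ((t : ℝ) + 2)) ≤ m t := key t ht
  have hφ0 : (0 : ℝ) ≤ η * G * ((t : ℝ) - 1) ^ 2 / (8 * ((t : ℝ) + 2)) := by positivity
  constructor
  · linarith
  · intro hc
    have hc1 : (20 : ℝ) / (η * β) ≤ (⌈20 / (η * β)⌉₊ : ℝ) := Nat.le_ceil _
    have hc2 : (⌈20 / (η * β)⌉₊ : ℝ) + 1 ≤ (t : ℝ) := by exact_mod_cast hc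
    have hηβ0 : (0 : ℝ) < η * β := mul_pos hη hβ
    have hct : 20 < η * β * (t : ℝ) := by
      have : (20 : ℝ) / (η * β) < (t : ℝ) := by linarith
      calc (20 : ℝ) = 20 / (η * β) * (η * β) := by field_simp
        _ < (t : ℝ) * (η * β) := by
            exact mul_lt_mul_of_pos_right this hηβ0
        _ = η * β * (t : ℝ) := by ring
    have hηβ1 : η * β ≤ 1 := by
      have h := mul_le_mul_of_nonneg_right hηβ hβ.le
      rwa [one_div, inv_mul_cancel₀ hβ.ne'] at h
    have ht21 : (21 : ℝ) ≤ (t : ℝ) := by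
      have h20 : (20 : ℝ) ≤ 20 / (η * β) := by
        rw [le_div_iff₀ hηβ0]; nlinarith
      have : (20 : ℕ) ≤ ⌈20 / (η * β)⌉₊ := by
        have : ((20 : ℕ) : ℝ) ≤ (⌈20 / (η * β)⌉₊ : ℝ) := by
          push_cast; linarith
        exact_mod_cast this
      have : (20 : ℝ) ≤ (⌈20 / (η * β)⌉₊ : ℝ) := by exact_mod_cast this
      linarith
    -- show the momentum term dominates: ηβ(t-1)^2 ≥ 16(t+2)
    have hkey : 16 * ((t : ℝ) + 2) ≤ η * β * ((t : ℝ) - 1) ^ 2 := by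
      nlinarith [mul_nonneg (sub_nonneg.mpr hct.le) (sq_nonneg ((t : ℝ) - 1)),
        sq_nonneg ((t : ℝ) - 21), hηβ0.le]
    have hbig : 2 * G / β ≤ η * G / 2 + η * G * ((t : ℝ) - 1) ^ 2 / (8 * ((t : ℝ) + 2)) := by
      rw [div_le_iff₀ hβ]
      have h2 : 2 * G ≤ η * G * ((t : ℝ) - 1) ^ 2 / (8 * ((t : ℝ) + 2)) * β := by
        rw [div_mul_eq_mul_div, le_div_iff₀ (by positivity)]
        nlinarith [mul_le_mul_of_nonneg_right hkey hG.le]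
      have h3 : (0 : ℝ) ≤ η * G / 2 * β := by positivity
      rw [add_mul]
      linarith [h2, h3]
    linarith
end

section
/- Let f : ℝ^d → ℝ be convex and β-smooth, 0 < η ≤ 1/β, and let (x_t, y_t) and (x̃_t, ỹ_t) be two NAG trajectories (x_t = y_{t-1} - η∇f(y_{t-1}), y_t = x_t + γ_t(x_t - x_{t-1}), γ_t = (t-1)/(t+2), y_0 = x_0) started at x_0 and x̃_0 with ‖x_0 - x̃_0‖ ≤ ε. Then for all T ≥ 1, ‖x_T - x̃_T‖ ≤ ε + ηβε·3^{T-1}. -/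
open Set InnerProductSpace

variable {E : Type*} [NormedAddCommGroup E] [InnerProductSpace ℝ E] [CompleteSpace E]

local notation "⟪" x ", " y "⟫" => @inner ℝ _ _ x y

lemma my_descent {f : E → ℝ} {f' : E → E} {β : ℝ} (hβ : 0 < β)
    (hgrad : ∀ x, HasGradientAt f (f' x) x)
    (hsmooth : ∀ u v, ‖f' u - f' v‖ ≤ β * ‖u - v‖) (a b : E) :
    f b ≤ f a + ⟪f' a, b - a⟫ + β * (‖b - a‖ * ‖b - a‖) := by
  have hconvs : Convex ℝ (segment ℝ a b) := convex_segment a b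
  have hmem : ∀ z ∈ segment ℝ a b, ‖z - a‖ ≤ ‖b - a‖ := by
    intro z hz
    rw [segment_eq_image'] at hz
    obtain ⟨t, ht, rfl⟩ := hz
    have : a + t • (b - a) - a = t • (b - a) := by abel
    rw [this, norm_smul]
    have h0 : (0:ℝ) ≤ ‖b - a‖ := norm_nonneg _
    have h1 : |t| ≤ 1 := by rw [abs_le]; constructor <;> [linarith [ht.1]; linarith [ht.2]]
    calc |t| * ‖b - a‖ ≤ 1 * ‖b - a‖ := by gcongr
      _ = ‖b - a‖ := one_mul _
  have hbound : ∀ z ∈ segment ℝ a b,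
      ‖toDual ℝ E (f' z) - toDual ℝ E (f' a)‖ ≤ β * ‖b - a‖ := by
    intro z hz
    have h : toDual ℝ E (f' z) - toDual ℝ E (f' a) = toDual ℝ E (f' z - f' a) := by
      rw [map_sub]
    rw [h, (toDual ℝ E).norm_map]
    calc ‖f' z - f' a‖ ≤ β * ‖z - a‖ := hsmooth z a
      _ ≤ β * ‖b - a‖ := by gcongr; exact hmem z hz
  have hmvt := hconvs.norm_image_sub_le_of_norm_hasFDerivWithin_le'
    (f' := fun z => toDual ℝ E (f' z)) (φ := toDual ℝ E (f' a)) (C := β * ‖b - a‖)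
    (fun z _ => (hgrad z).hasFDerivAt.hasFDerivWithinAt) hbound
    (left_mem_segment ℝ a b) (right_mem_segment ℝ a b)
  rw [toDual_apply_apply] at hmvt
  have := (abs_le.mp (by rwa [Real.norm_eq_abs] at hmvt)).2
  nlinarith [norm_nonneg (b - a)]

lemma my_subgrad {f : E → ℝ} {f' : E → E} (hconv : ConvexOn ℝ Set.univ f)
    (hgrad : ∀ x, HasGradientAt f (f' x) x) (u v : E) :
    f u + ⟪f' u, v - u⟫ ≤ f v := by
  set L : ℝ →ᵃ[ℝ] E := AffineMap.lineMap u v with hL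
  have hconvh : ConvexOn ℝ Set.univ (f ∘ L) := by
    simpa using hconv.comp_affineMap L
  have hder : HasDerivAt (f ∘ L) ⟪f' (L 0), v - u⟫ 0 := by
    have hL0 : HasDerivAt (fun τ : ℝ => L τ) (v - u) 0 := by
      have h1 : HasDerivAt (fun τ : ℝ => τ • (v - u) + u) ((1:ℝ) • (v - u)) 0 :=
        ((hasDerivAt_id 0).smul_const (v - u)).add_const u
      have heq : (fun τ : ℝ => τ • (v - u) + u) = (fun τ : ℝ => L τ) := by
        funext τ; simp [hL, AffineMap.lineMap_apply_module]; module
      rw [heq] at h1; simpa using h1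
    have := (hgrad (L 0)).hasFDerivAt.comp_hasDerivAt 0 hL0
    simpa [toDual_apply_apply] using this
  have hs := hconvh.le_slope_of_hasDerivAt (mem_univ (0:ℝ)) (mem_univ (1:ℝ)) one_pos hder
  have hL0' : L 0 = u := by simp [hL]
  have hL1 : L 1 = v := by simp [hL]
  rw [slope_def_field] at hs
  simp only [Function.comp, hL0', hL1] at hs
  have h2 : ⟪f' u, v - u⟫ ≤ f v - f u := by
    field_simp at hs; linarith
  linarith

lemma my_coco {f : E → ℝ} {f' : E → E} {β : ℝ} (hβ : 0 < β)
    (hconv : ConvexOn ℝ Set.univ f)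
    (hgrad : ∀ x, HasGradientAt f (f' x) x)
    (hsmooth : ∀ u v, ‖f' u - f' v‖ ≤ β * ‖u - v‖) (u v : E) :
    (1 / (2 * β)) * (‖f' u - f' v‖ * ‖f' u - f' v‖) ≤ ⟪f' u - f' v, u - v⟫ := by
  have key : ∀ a b : E, f a + ⟪f' a, b - a⟫ +
      (1 / (4 * β)) * (‖f' b - f' a‖ * ‖f' b - f' a‖) ≤ f b := by
    intro a b
    set g := f' b - f' a with hg
    set c : ℝ := 1 / (2 * β) with hc
    have hcpos : (0:ℝ) < c := by positivity
    set w := b - c • g with hw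
    have h1 := my_subgrad hconv hgrad a w
    have h2 := my_descent hβ hgrad hsmooth b w
    have hwb : w - b = -(c • g) := by rw [hw]; abel
    have hwa : w - a = (b - a) - c • g := by rw [hw]; abel
    rw [hwa, inner_sub_right, real_inner_smul_right] at h1
    rw [hwb, inner_neg_right, real_inner_smul_right, norm_neg, norm_smul,
      Real.norm_eq_abs, abs_of_pos hcpos] at h2
    have hgb : ⟪f' b, g⟫ - ⟪f' a, g⟫ = ‖g‖ * ‖g‖ := by
      rw [← inner_sub_left, ← hg, real_inner_self_eq_norm_mul_norm]
    have h3 : c * ⟪f' b, g⟫ - c * ⟪f' a, g⟫ = c * (‖g‖ * ‖g‖) := by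
      rw [← mul_sub, hgb]
    have e1 : β * (c * ‖g‖ * (c * ‖g‖)) = (1/2) * (c * (‖g‖ * ‖g‖)) := by
      rw [hc]; field_simp
    have e2 : 1 / (4 * β) = c / 2 := by rw [hc]; ring
    rw [e1] at h2
    rw [e2]
    have goal' : f a + ⟪f' a, b - a⟫ + c / 2 * (‖g‖ * ‖g‖) ≤ f b := by
      nlinarith [h1, h2, h3]
    exact goal'
  have k1 := key u v
  have k2 := key v u
  have hsym : ‖f' v - f' u‖ = ‖f' u - f' v‖ := by rw [← norm_neg]; congr 1; abel
  rw [hsym] at k1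
  have hi1 : ⟪f' u - f' v, u - v⟫ = -⟪f' u, v - u⟫ - ⟪f' v, u - v⟫ := by
    rw [inner_sub_left, show (u:E) - v = -(v - u) from by abel, inner_neg_right]
  have hq : 1 / (2 * β) = 1 / (4 * β) + 1 / (4 * β) := by ring
  rw [hq, hi1]
  nlinarith [k1, k2]

lemma my_nonexp {f : E → ℝ} {f' : E → E} {β η : ℝ} (hβ : 0 < β) (hη : 0 < η)
    (hηβ : η ≤ 1 / β)
    (hconv : ConvexOn ℝ Set.univ f)
    (hgrad : ∀ x, HasGradientAt f (f' x) x)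
    (hsmooth : ∀ u v, ‖f' u - f' v‖ ≤ β * ‖u - v‖) (u v : E) :
    ‖(u - η • f' u) - (v - η • f' v)‖ ≤ ‖u - v‖ := by
  have hco := my_coco hβ hconv hgrad hsmooth u v
  set a := u - v with ha
  set g := f' u - f' v with hg
  have hrw : (u - η • f' u) - (v - η • f' v) = a - η • g := by
    rw [ha, hg, smul_sub]; abel
  rw [hrw]
  have hsq : ‖a - η • g‖ ^ 2 = ‖a‖ ^ 2 - 2 * (η * ⟪a, g⟫) + η ^ 2 * ‖g‖ ^ 2 := by
    rw [norm_sub_sq_real, real_inner_smul_right, norm_smul, Real.norm_eq_abs,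
      abs_of_pos hη, mul_pow]
  have hag : ⟪a, g⟫ = ⟪g, a⟫ := real_inner_comm g a
  rw [hag] at hsq
  have h5 := mul_le_mul_of_nonneg_left hco (by positivity : (0:ℝ) ≤ 2 * η)
  have e5 : 2 * η * (1 / (2 * β) * (‖g‖ * ‖g‖)) = η * (1/β) * (‖g‖ * ‖g‖) := by
    field_simp
  rw [e5] at h5
  have h6 : η ^ 2 * ‖g‖ ^ 2 ≤ η * (1/β) * (‖g‖ * ‖g‖) := by
    have hm : η * η ≤ η * (1/β) := mul_le_mul_of_nonneg_left hηβ hη.le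
    nlinarith [sq_nonneg ‖g‖, norm_nonneg g]
  have h2 : ‖a - η • g‖ ^ 2 ≤ ‖a‖ ^ 2 := by linarith
  nlinarith [norm_nonneg (a - η • g), norm_nonneg a]

lemma my_arith {η β ε A B A' B' Y K : ℝ} (hη : 0 < η) (hβ : 0 < β) (hε : 0 < ε)
    (hβη : η * β ≤ 1) (hK : 0 ≤ K) (hA0 : 0 ≤ A)
    (ihy : A ≤ ε + η * β * ε * K) (ihm : B ≤ η * β * ε * K)
    (hA : A' ≤ A) (hB : B' ≤ B + η * (β * A)) (hY : Y ≤ A' + B') :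
    Y ≤ ε + η * β * ε * (3 * K + 1) ∧ B' ≤ η * β * ε * (3 * K + 1) := by
  have h1 : η * β * A ≤ η * β * (ε + η * β * ε * K) :=
    mul_le_mul_of_nonneg_left ihy (by positivity)
  have h2 : (η * β) * (η * β * ε * K) ≤ 1 * (η * β * ε * K) :=
    mul_le_mul_of_nonneg_right hβη (by positivity)
  have h3 : (0:ℝ) ≤ η * β * ε * K := by positivity
  constructor <;> nlinarith [h1, h2, h3]


/-- Exponential upper bound on the initialization stability of NAG for convex
    β-smooth objectives: ‖x_T - x̃_T‖ ≤ ε + ηβε·3^{T-1}. -/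
theorem stmt_15 {d : ℕ} (β η ε : ℝ) (hβ : 0 < β) (hη : 0 < η) (hηβ : η ≤ 1 / β)
    (hε : 0 < ε)
    (f : EuclideanSpace ℝ (Fin d) → ℝ)
    (f' : EuclideanSpace ℝ (Fin d) → EuclideanSpace ℝ (Fin d))
    (hconv : ConvexOn ℝ Set.univ f)
    (hgrad : ∀ x, HasGradientAt f (f' x) x)
    (hsmooth : ∀ u v, ‖f' u - f' v‖ ≤ β * ‖u - v‖)
    (x y xt yt : ℕ → EuclideanSpace ℝ (Fin d))
    (hy0 : y 0 = x 0) (hyt0 : yt 0 = xt 0)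
    (hx : ∀ t : ℕ, 1 ≤ t → x t = y (t - 1) - η • f' (y (t - 1)))
    (hy : ∀ t : ℕ, 1 ≤ t →
      y t = x t + (((t : ℝ) - 1) / ((t : ℝ) + 2)) • (x t - x (t - 1)))
    (hxt : ∀ t : ℕ, 1 ≤ t → xt t = yt (t - 1) - η • f' (yt (t - 1)))
    (hyt : ∀ t : ℕ, 1 ≤ t →
      yt t = xt t + (((t : ℝ) - 1) / ((t : ℝ) + 2)) • (xt t - xt (t - 1)))
    (h0 : ‖x 0 - xt 0‖ ≤ ε) :
    ∀ T : ℕ, 1 ≤ T → ‖x T - xt T‖ ≤ ε + η * β * ε * 3 ^ (T - 1) := by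
  have nonexp : ∀ u v, ‖(u - η • f' u) - (v - η • f' v)‖ ≤ ‖u - v‖ :=
    my_nonexp hβ hη hηβ hconv hgrad hsmooth
  have hβη : η * β ≤ 1 := (le_div_iff₀ hβ).mp hηβ
  have key : ∀ t : ℕ, ‖y t - yt t‖ ≤ ε + η * β * ε * (((3:ℝ) ^ t - 1) / 2) ∧
      ‖(y t - x t) - (yt t - xt t)‖ ≤ η * β * ε * (((3:ℝ) ^ t - 1) / 2) := by
    intro t
    induction t with
    | zero =>
      constructor
      · rw [hy0, hyt0]; simpa using h0
      · rw [hy0, hyt0]; simp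
    | succ t ih =>
      obtain ⟨ihy, ihm⟩ := ih
      have hst : (1:ℕ) ≤ t + 1 := Nat.succ_le_succ t.zero_le
      have hx1 := hx (t+1) hst
      have hxt1 := hxt (t+1) hst
      have hy1 := hy (t+1) hst
      have hyt1 := hyt (t+1) hst
      simp only [Nat.add_sub_cancel] at hx1 hxt1 hy1 hyt1
      set γ : ℝ := (((t+1 : ℕ) : ℝ) - 1) / (((t+1 : ℕ) : ℝ) + 2) with hγ
      have hc1 : (1:ℝ) ≤ ((t+1 : ℕ) : ℝ) := by exact_mod_cast hst
      have hγ0 : 0 ≤ γ := by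
        rw [hγ]; apply div_nonneg (by linarith) (by linarith)
      have hγ1 : γ ≤ 1 := by
        rw [hγ, div_le_one (by linarith)]; linarith
      have hA : ‖x (t+1) - xt (t+1)‖ ≤ ‖y t - yt t‖ := by
        rw [hx1, hxt1]; exact nonexp (y t) (yt t)
      have hm1 : y (t+1) - x (t+1) = γ • (x (t+1) - x t) := by
        rw [hy1]; rw [add_sub_cancel_left]
      have hmt1 : yt (t+1) - xt (t+1) = γ • (xt (t+1) - xt t) := by
        rw [hyt1]; rw [add_sub_cancel_left]
      have hd : x (t+1) - x t = (y t - x t) - η • f' (y t) := by rw [hx1]; abel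
      have hdt : xt (t+1) - xt t = (yt t - xt t) - η • f' (yt t) := by rw [hxt1]; abel
      have hmdiff : (y (t+1) - x (t+1)) - (yt (t+1) - xt (t+1)) =
          γ • (((y t - x t) - (yt t - xt t)) - η • (f' (y t) - f' (yt t))) := by
        rw [hm1, hmt1, hd, hdt, ← smul_sub]
        congr 1
        rw [smul_sub]; abel
      have hB : ‖(y (t+1) - x (t+1)) - (yt (t+1) - xt (t+1))‖ ≤
          ‖(y t - x t) - (yt t - xt t)‖ + η * (β * ‖y t - yt t‖) := by
        rw [hmdiff, norm_smul, Real.norm_eq_abs, abs_of_nonneg hγ0]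
        calc γ * ‖((y t - x t) - (yt t - xt t)) - η • (f' (y t) - f' (yt t))‖
            ≤ 1 * ‖((y t - x t) - (yt t - xt t)) - η • (f' (y t) - f' (yt t))‖ := by
              gcongr
          _ = ‖((y t - x t) - (yt t - xt t)) - η • (f' (y t) - f' (yt t))‖ := one_mul _
          _ ≤ ‖(y t - x t) - (yt t - xt t)‖ + ‖η • (f' (y t) - f' (yt t))‖ :=
              norm_sub_le _ _
          _ ≤ ‖(y t - x t) - (yt t - xt t)‖ + η * (β * ‖y t - yt t‖) := by
              rw [norm_smul, Real.norm_eq_abs, abs_of_pos hη]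
              gcongr
              exact hsmooth (y t) (yt t)
      have hY : ‖y (t+1) - yt (t+1)‖ ≤ ‖x (t+1) - xt (t+1)‖ +
          ‖(y (t+1) - x (t+1)) - (yt (t+1) - xt (t+1))‖ := by
        have h : y (t+1) - yt (t+1) = (x (t+1) - xt (t+1)) +
            ((y (t+1) - x (t+1)) - (yt (t+1) - xt (t+1))) := by abel
        rw [h]; exact norm_add_le _ _
      have hKs : ((3:ℝ) ^ (t+1) - 1) / 2 = 3 * (((3:ℝ) ^ t - 1) / 2) + 1 := by
        rw [pow_succ]; ring
      have hp1 : (1:ℝ) ≤ 3 ^ t := one_le_pow₀ (by norm_num : (1:ℝ) ≤ 3)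
      have hK0 : (0:ℝ) ≤ ((3:ℝ) ^ t - 1) / 2 := by linarith
      rw [hKs]
      have := my_arith hη hβ hε hβη hK0 (norm_nonneg (y t - yt t)) ihy ihm hA hB hY
      exact ⟨this.1, this.2⟩
  intro T hT
  obtain ⟨S, rfl⟩ : ∃ S, T = S + 1 := ⟨T - 1, (Nat.succ_pred_eq_of_pos hT).symm⟩
  have hx1 := hx (S+1) (Nat.succ_le_succ S.zero_le)
  have hxt1 := hxt (S+1) (Nat.succ_le_succ S.zero_le)
  simp only [Nat.add_sub_cancel] at hx1 hxt1 ⊢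
  have hA : ‖x (S+1) - xt (S+1)‖ ≤ ‖y S - yt S‖ := by
    rw [hx1, hxt1]; exact nonexp (y S) (yt S)
  have hk := hA.trans (key S).1
  have hp : (0:ℝ) < 3 ^ S := by positivity
  have hηβε : (0:ℝ) ≤ η * β * ε := by positivity
  have hle : ((3:ℝ) ^ S - 1) / 2 ≤ 3 ^ S := by linarith
  have := mul_le_mul_of_nonneg_left hle hηβε
  linarith
end

section
/- Let H be a d×d symmetric positive semidefinite matrix with H ⪯ βI, let f(x) = (1/2)xᵀHx + bᵀx + c be the corresponding quadratic, 0 < η ≤ 1/β, and let (x_t) and (x̃_t) be two NAG trajectories started from x_0 and x̃_0 with ‖x_0 - x̃_0‖ ≤ ε. Then for all T ≥ 1, ‖x_T - x̃_T‖ ≤ 4Tε. -/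
open scoped RealInnerProductSpace

lemma psd_inner_nonneg' {d : ℕ} {P : Matrix (Fin d) (Fin d) ℝ} (hP : P.PosSemidef)
    (v : EuclideanSpace ℝ (Fin d)) : 0 ≤ ⟪v, Matrix.toEuclideanLin P v⟫ := by
  have h := hP.re_dotProduct_nonneg (WithLp.equiv 2 _ v)
  rw [EuclideanSpace.inner_eq_star_dotProduct, Matrix.ofLp_toEuclideanLin_apply, dotProduct_comm]
  simpa using h

lemma scalar_energy_step (γ a bb cc pp np nw : ℝ) (hγ0 : 0 ≤ γ) (hγ1 : γ ≤ 1)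
    (h1 : 0 ≤ cc) (h2 : pp ≤ np) (h3 : 0 ≤ nw) :
    a + 2 * γ * bb + γ ^ 2 * cc - 2 * np + pp
      + (γ ^ 2 * nw - 2 * γ * (bb + γ * cc) + np) ≤ a + nw := by
  have hγ2 : γ ^ 2 ≤ 1 := by nlinarith
  nlinarith [mul_nonneg (sq_nonneg γ) h1, mul_le_of_le_one_left h3 hγ2]

/-- Initialization stability of NAG on a convex quadratic f(x) = ½xᵀHx + bᵀx + c with
    0 ⪯ H ⪯ βI and step size 0 < η ≤ 1/β: ‖x_T - x̃_T‖ ≤ 4Tε for all T ≥ 1. -/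
theorem stmt_16 {d : ℕ} (β η ε : ℝ) (hβ : 0 < β) (hη : 0 < η) (hηβ : η ≤ 1 / β)
    (H : Matrix (Fin d) (Fin d) ℝ) (hHsymm : H.IsSymm) (hHpsd : H.PosSemidef)
    (hHβ : (β • (1 : Matrix (Fin d) (Fin d) ℝ) - H).PosSemidef)
    (b : EuclideanSpace ℝ (Fin d)) (c : ℝ)
    (f : EuclideanSpace ℝ (Fin d) → ℝ)
    (hf : ∀ v, f v = (1 / 2) * ⟪v, Matrix.toEuclideanLin H v⟫ + ⟪b, v⟫ + c)
    (f' : EuclideanSpace ℝ (Fin d) → EuclideanSpace ℝ (Fin d))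
    (hf' : ∀ v, f' v = Matrix.toEuclideanLin H v + b)
    (x y xt yt : ℕ → EuclideanSpace ℝ (Fin d))
    (hy0 : y 0 = x 0) (hyt0 : yt 0 = xt 0)
    (hx : ∀ t : ℕ, 1 ≤ t → x t = y (t - 1) - η • f' (y (t - 1)))
    (hy : ∀ t : ℕ, 1 ≤ t →
      y t = x t + (((t : ℝ) - 1) / ((t : ℝ) + 2)) • (x t - x (t - 1)))
    (hxt : ∀ t : ℕ, 1 ≤ t → xt t = yt (t - 1) - η • f' (yt (t - 1)))
    (hyt : ∀ t : ℕ, 1 ≤ t →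
      yt t = xt t + (((t : ℝ) - 1) / ((t : ℝ) + 2)) • (xt t - xt (t - 1)))
    (h0 : ‖x 0 - xt 0‖ ≤ ε) :
    ∀ T : ℕ, 1 ≤ T → ‖x T - xt T‖ ≤ 4 * (T : ℝ) * ε := by
  intro T hT
  have hε0 : 0 ≤ ε := le_trans (norm_nonneg _) h0
  obtain ⟨A, hAdef⟩ : ∃ A : EuclideanSpace ℝ (Fin d) →ₗ[ℝ] EuclideanSpace ℝ (Fin d),
      A = Matrix.toEuclideanLin H := ⟨_, rfl⟩
  obtain ⟨L, hLdef⟩ : ∃ L : EuclideanSpace ℝ (Fin d) →ₗ[ℝ] EuclideanSpace ℝ (Fin d),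
      L = η • A := ⟨_, rfl⟩
  -- symmetry of L
  have hAsymm : (Matrix.toEuclideanLin H).IsSymmetric :=
    Matrix.isHermitian_iff_isSymmetric.mp hHpsd.isHermitian
  have hLsymm : ∀ u v, ⟪L u, v⟫ = ⟪u, L v⟫ := by
    intro u v
    simp only [hLdef, hAdef, LinearMap.smul_apply, real_inner_smul_left, real_inner_smul_right]
    rw [hAsymm u v]
  -- positivity of L
  have hLpos : ∀ v, 0 ≤ ⟪v, L v⟫ := by
    intro v
    simp only [hLdef, hAdef, LinearMap.smul_apply, real_inner_smul_right]
    exact mul_nonneg hη.le (psd_inner_nonneg' hHpsd v)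
  -- L ⪯ I
  have hLle : ∀ v, ⟪v, L v⟫ ≤ ‖v‖ ^ 2 := by
    intro v
    have h1 : 0 ≤ ⟪v, Matrix.toEuclideanLin (β • (1 : Matrix (Fin d) (Fin d) ℝ) - H) v⟫ :=
      psd_inner_nonneg' hHβ v
    have h2 : Matrix.toEuclideanLin (β • (1 : Matrix (Fin d) (Fin d) ℝ) - H) v
        = β • v - A v := by
      simp [hAdef, Matrix.toEuclideanLin_apply, Matrix.sub_mulVec, Matrix.smul_mulVec,
        Matrix.one_mulVec]
    rw [h2, inner_sub_right, real_inner_smul_right, real_inner_self_eq_norm_sq] at h1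
    have hAv : ⟪v, A v⟫ ≤ β * ‖v‖ ^ 2 := by linarith
    have hηβ1 : η * β ≤ 1 := by
      rw [le_div_iff₀ hβ] at hηβ; linarith
    have h3 : η * ⟪v, A v⟫ ≤ η * (β * ‖v‖ ^ 2) :=
      mul_le_mul_of_nonneg_left hAv hη.le
    have h4 : η * (β * ‖v‖ ^ 2) ≤ ‖v‖ ^ 2 := by
      nlinarith [sq_nonneg ‖v‖]
    simp only [hLdef, LinearMap.smul_apply, real_inner_smul_right]
    linarith
  -- the trajectory difference
  obtain ⟨δ, hδ⟩ : ∃ δ : ℕ → EuclideanSpace ℝ (Fin d), ∀ t, δ t = x t - xt t :=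
    ⟨_, fun _ => rfl⟩
  -- one-step map
  obtain ⟨Mf, hMf⟩ : ∃ Mf : EuclideanSpace ℝ (Fin d) → EuclideanSpace ℝ (Fin d),
      ∀ v, Mf v = v - L v := ⟨_, fun _ => rfl⟩
  -- the gradient-step recursion
  have hstep : ∀ t : ℕ, δ (t + 1) = Mf (y t - yt t) := by
    intro t
    have h1 := hx (t + 1) (by omega)
    have h2 := hxt (t + 1) (by omega)
    simp only [Nat.add_sub_cancel] at h1 h2
    rw [hf'] at h1
    rw [hf'] at h2
    rw [hδ, hMf, h1, h2]
    simp only [hLdef, hAdef, LinearMap.smul_apply, map_sub, smul_sub, smul_add]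
    abel
  -- the momentum combination
  have hyd : ∀ s : ℕ,
      y (s + 1) - yt (s + 1)
        = δ (s + 1) + ((((s + 1 : ℕ) : ℝ) - 1) / (((s + 1 : ℕ) : ℝ) + 2)) •
            (δ (s + 1) - δ s) := by
    intro s
    have h1 := hy (s + 1) (by omega)
    have h2 := hyt (s + 1) (by omega)
    simp only [Nat.add_sub_cancel] at h1 h2
    rw [h1, h2, hδ, hδ]
    simp only [smul_sub]
    abel
  -- key one-step energy decrease
  have key : ∀ (u w : EuclideanSpace ℝ (Fin d)) (γ : ℝ), 0 ≤ γ → γ ≤ 1 →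
      ⟪Mf (u + γ • w), L (Mf (u + γ • w))⟫ + ‖Mf (u + γ • w) - u‖ ^ 2
        ≤ ⟪u, L u⟫ + ‖w‖ ^ 2 := by
    intro u w γ hγ0 hγ1
    obtain ⟨s, hsdef⟩ : ∃ s : EuclideanSpace ℝ (Fin d), s = u + γ • w := ⟨_, rfl⟩
    obtain ⟨p, hpdef⟩ : ∃ p : EuclideanSpace ℝ (Fin d), p = L s := ⟨_, rfl⟩
    rw [← hsdef, hMf s]
    have hsymm_wu : ⟪w, L u⟫ = ⟪u, L w⟫ := by rw [← hLsymm w u, real_inner_comm]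
    -- expand the L-term
    have e1 : ⟪s - L s, L (s - L s)⟫ = ⟪s, L s⟫ - 2 * ‖p‖ ^ 2 + ⟪p, L p⟫ := by
      rw [map_sub, inner_sub_left, inner_sub_right, inner_sub_right]
      have a1 : ⟪s, L (L s)⟫ = ‖p‖ ^ 2 := by
        rw [← hLsymm s (L s), ← hpdef, real_inner_self_eq_norm_sq]
      have a2 : ⟪L s, L s⟫ = ‖p‖ ^ 2 := by
        rw [← hpdef, real_inner_self_eq_norm_sq]
      have a3 : ⟪L s, L (L s)⟫ = ⟪p, L p⟫ := by rw [hpdef]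
      rw [a1, a2, a3]; ring
    -- expand the norm term
    have e2 : ‖s - L s - u‖ ^ 2 = γ ^ 2 * ‖w‖ ^ 2 - 2 * γ * ⟪w, p⟫ + ‖p‖ ^ 2 := by
      have hrw : s - L s - u = γ • w - p := by rw [hpdef, hsdef]; abel
      rw [hrw, norm_sub_sq_real, norm_smul, real_inner_smul_left]
      simp only [Real.norm_eq_abs, mul_pow, sq_abs]
      ring
    have e3 : ⟪s, L s⟫ = ⟪u, L u⟫ + 2 * γ * ⟪u, L w⟫ + γ ^ 2 * ⟪w, L w⟫ := by
      rw [hsdef, map_add, map_smul, inner_add_left, inner_add_right, inner_add_right,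
        real_inner_smul_left, real_inner_smul_right, real_inner_smul_left,
        real_inner_smul_right, hsymm_wu]
      ring
    have e4 : ⟪w, p⟫ = ⟪u, L w⟫ + γ * ⟪w, L w⟫ := by
      rw [hpdef, hsdef, map_add, map_smul, inner_add_right, real_inner_smul_right, hsymm_wu]
    have hc : 0 ≤ ⟪w, L w⟫ := hLpos w
    have hp : ⟪p, L p⟫ ≤ ‖p‖ ^ 2 := hLle p
    have hw2 : 0 ≤ ‖w‖ ^ 2 := sq_nonneg _
    rw [e1, e3, e2, e4]
    exact scalar_energy_step γ ⟪u, L u⟫ ⟪u, L w⟫ ⟪w, L w⟫ ⟪p, L p⟫ (‖p‖ ^ 2) (‖w‖ ^ 2)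
      hγ0 hγ1 hc hp hw2
  -- the energy is bounded by ‖δ 0‖²
  have hE : ∀ s : ℕ, ⟪δ (s + 1), L (δ (s + 1))⟫ + ‖δ (s + 1) - δ s‖ ^ 2 ≤ ‖δ 0‖ ^ 2 := by
    intro s
    induction s with
    | zero =>
      have h1 : δ (0 + 1) = Mf (δ 0 + (0 : ℝ) • (0 : EuclideanSpace ℝ (Fin d))) := by
        rw [hstep 0, hy0, hyt0, hδ]
        norm_num
      have h2 := key (δ 0) 0 0 le_rfl zero_le_one
      rw [h1]
      have h3 := hLle (δ 0)
      simp only [norm_zero] at h2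
      have h4 : (0 : ℝ) ^ 2 = 0 := by norm_num
      rw [h4] at h2
      linarith
    | succ s ih =>
      obtain ⟨γ, hγdef⟩ : ∃ γ : ℝ,
          γ = (((s + 1 : ℕ) : ℝ) - 1) / (((s + 1 : ℕ) : ℝ) + 2) := ⟨_, rfl⟩
      have hs0 : (0 : ℝ) ≤ (s : ℝ) := Nat.cast_nonneg s
      have hγ0 : 0 ≤ γ := by
        rw [hγdef]
        apply div_nonneg <;> push_cast <;> linarith
      have hγ1 : γ ≤ 1 := by
        rw [hγdef, div_le_one (by push_cast; linarith)]
        push_cast; linarith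
      have h1 : δ (s + 1 + 1) = Mf (δ (s + 1) + γ • (δ (s + 1) - δ s)) := by
        rw [hstep (s + 1), hyd s, hγdef]
      rw [h1]
      exact le_trans (key (δ (s + 1)) (δ (s + 1) - δ s) γ hγ0 hγ1) ih
  -- consecutive differences are ≤ ε
  have hw : ∀ s : ℕ, ‖δ (s + 1) - δ s‖ ≤ ε := by
    intro s
    have h1 := hE s
    have h2 := hLpos (δ (s + 1))
    have h3 : ‖δ 0‖ ^ 2 ≤ ε ^ 2 := by
      have h4 : ‖δ 0‖ ≤ ε := by rw [hδ]; exact h0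
      nlinarith [norm_nonneg (δ 0)]
    nlinarith [norm_nonneg (δ (s + 1) - δ s)]
  -- telescoping bound
  have htel : ∀ t : ℕ, ‖δ t‖ ≤ ‖δ 0‖ + t * ε := by
    intro t
    induction t with
    | zero => simp
    | succ t ih =>
      have h1 : δ (t + 1) = δ t + (δ (t + 1) - δ t) := by abel
      calc ‖δ (t + 1)‖ = ‖δ t + (δ (t + 1) - δ t)‖ := by rw [← h1]
        _ ≤ ‖δ t‖ + ‖δ (t + 1) - δ t‖ := norm_add_le _ _
        _ ≤ (‖δ 0‖ + t * ε) + ε := add_le_add ih (hw t)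
        _ = ‖δ 0‖ + (t + 1 : ℕ) * ε := by push_cast; ring
  have hδ0 : ‖δ 0‖ ≤ ε := by rw [hδ]; exact h0
  have hT1 : (1 : ℝ) ≤ (T : ℝ) := by exact_mod_cast hT
  have hfin2 : ‖δ T‖ ≤ ε + T * ε := le_trans (htel T) (by linarith)
  have hgoal : ‖δ T‖ ≤ 4 * (T : ℝ) * ε := by nlinarith
  rw [hδ] at hgoal
  exact hgoal
end

section
/- Let f : ℝ → ℝ be defined piecewise from a convex, β-smooth, G-Lipschitz function g : ℝ → ℝ and a point p by: f(x) = g(x) for x ≤ p; f(x) = g(p) + g'(p)(x-p) + (β/2)(x-p)² for p < x ≤ p - g'(p)/β; and f(x) = g(p) - g'(p)²/(2β) for x > p - g'(p)/β, where g'(p) ≤ 0. Then f is convex, β-smooth, and G-Lipschitz, and f attains its minimum at x* = p - g'(p)/β with f'(x*) = 0. -/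
open Set

/-- Quadratic continuation to a plateau: if g : ℝ → ℝ is convex, β-smooth and
    G-Lipschitz with g'(p) ≤ 0, and f agrees with g on (-∞, p], continues quadratically
    on (p, p - g'(p)/β] and is constant afterwards, then f is convex, β-smooth and
    G-Lipschitz, and attains its minimum at x* = p - g'(p)/β where f'(x*) = 0. -/
theorem stmt_19 (β G p : ℝ) (hβ : 0 < β) (hG : 0 < G)
    (g : ℝ → ℝ) (hgconv : ConvexOn ℝ Set.univ g) (hgdiff : Differentiable ℝ g)
    (hgsmooth : ∀ a b : ℝ, |deriv g a - deriv g b| ≤ β * |a - b|)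
    (hglip : ∀ a b : ℝ, |g a - g b| ≤ G * |a - b|)
    (hg'p : deriv g p ≤ 0)
    (f : ℝ → ℝ)
    (hf1 : ∀ x : ℝ, x ≤ p → f x = g x)
    (hf2 : ∀ x : ℝ, p < x → x ≤ p - deriv g p / β →
      f x = g p + deriv g p * (x - p) + β / 2 * (x - p) ^ 2)
    (hf3 : ∀ x : ℝ, p - deriv g p / β < x → f x = g p - (deriv g p) ^ 2 / (2 * β)) :
    ConvexOn ℝ Set.univ f ∧
    Differentiable ℝ f ∧
    (∀ a b : ℝ, |deriv f a - deriv f b| ≤ β * |a - b|) ∧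
    (∀ a b : ℝ, |f a - f b| ≤ G * |a - b|) ∧
    (∀ x : ℝ, f (p - deriv g p / β) ≤ f x) ∧
    deriv f (p - deriv g p / β) = 0 := by
  have hβ0 : (β : ℝ) ≠ 0 := ne_of_gt hβ
  set c := deriv g p with hc
  set s := p - c / β with hsdef
  have hβs : β * (s - p) = -c := by rw [hsdef]; field_simp; ring
  have hps : p ≤ s := by
    have h1 : c / β ≤ 0 := div_nonpos_of_nonpos_of_nonneg hg'p hβ.le
    rw [hsdef]; linarith
  set q : ℝ → ℝ := fun y => g p + c * (y - p) + β / 2 * (y - p) ^ 2 with hqdef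
  have hq : ∀ x : ℝ, HasDerivAt q (c + β * (x - p)) x := by
    intro x
    have h1 : HasDerivAt (fun y : ℝ => y - p) 1 x := (hasDerivAt_id x).sub_const p
    have h2 := ((h1.const_mul c).const_add (g p)).add ((h1.pow 2).const_mul (β / 2))
    refine h2.congr_deriv ?_
    push_cast
    ring
  have hfp : f p = g p := hf1 p le_rfl
  have hfq : ∀ x ∈ Icc p s, f x = q x := by
    intro x hx
    rcases eq_or_lt_of_le hx.1 with rfl | h
    · rw [hfp]; simp [hqdef]
    · rw [hf2 x h hx.2]
  have hqs : q s = g p - c ^ 2 / (2 * β) := by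
    simp only [hqdef, hsdef]
    field_simp
    ring
  have hfs : ∀ x : ℝ, s ≤ x → f x = g p - c ^ 2 / (2 * β) := by
    intro x hx
    rcases eq_or_lt_of_le hx with heq | h
    · rw [← heq, ← hqs]; exact hfq s ⟨hps, le_rfl⟩
    · exact hf3 x h
  set D : ℝ → ℝ := fun x => if x ≤ p then deriv g x else min (c + β * (x - p)) 0 with hDdef
  have hcle : ∀ x : ℝ, c ≤ min (c + β * (x - p)) 0 ∨ True := fun _ => Or.inr trivial
  have hcmin : ∀ x : ℝ, p ≤ x → c ≤ min (c + β * (x - p)) 0 := by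
    intro x hx
    refine le_min (by nlinarith) hg'p
  have hmain : ∀ x : ℝ, HasDerivAt f (D x) x := by
    intro x
    rcases lt_trichotomy x p with hxp | heq | hpx
    · have he : f =ᶠ[nhds x] g := by
        filter_upwards [Iio_mem_nhds hxp] with y hy
        exact hf1 y (le_of_lt hy)
      have h1 : HasDerivAt f (deriv g x) x := ((hgdiff x).hasDerivAt).congr_of_eventuallyEq he
      have hx : D x = deriv g x := by simp [hDdef, hxp.le]
      rw [hx]; exact h1
    · rw [heq]
      have hleft : HasDerivWithinAt f c (Iic p) p := by
        have h0 : HasDerivWithinAt g c (Iic p) p := by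
          rw [hc]; exact ((hgdiff p).hasDerivAt).hasDerivWithinAt
        exact h0.congr (fun y hy => hf1 y hy) hfp
      have hright : HasDerivWithinAt f c (Ici p) p := by
        rcases eq_or_lt_of_le hps with hsp | hsp
        · have hc0 : c = 0 := by
            have h := hβs
            rw [← hsp] at h
            simp at h
            linarith
          have h0 : HasDerivWithinAt (fun _ : ℝ => g p) 0 (Ici p) p :=
            hasDerivWithinAt_const _ _ _
          rw [hc0]
          refine h0.congr (fun y hy => ?_) hfp
          rcases eq_or_lt_of_le (mem_Ici.mp hy) with rfl | h
          · exact hfp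
          · rw [hfs y (le_of_lt (hsp ▸ h)), hc0]
            ring
        · have hq0 : HasDerivWithinAt q c (Icc p s) p := by
            have h0 := (hq p).hasDerivWithinAt (s := Icc p s)
            simpa using h0
          have h1 : HasDerivWithinAt f c (Icc p s) p :=
            hq0.congr (fun y hy => hfq y hy) (hfq p ⟨le_rfl, hps⟩)
          exact h1.mono_of_mem_nhdsWithin (Icc_mem_nhdsGE_of_mem ⟨le_rfl, hsp⟩)
      have hu := hleft.union hright
      rw [Iic_union_Ici] at hu
      have hDp : D p = c := by simp [hDdef, ← hc]
      rw [hDp]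
      exact hasDerivWithinAt_univ.mp hu
    · rcases lt_trichotomy x s with hxs | heq | hsx
      · have he : f =ᶠ[nhds x] q := by
          filter_upwards [Ioo_mem_nhds hpx hxs] with y hy
          exact hfq y ⟨hy.1.le, hy.2.le⟩
        have h1 : HasDerivAt f (c + β * (x - p)) x := (hq x).congr_of_eventuallyEq he
        have hle : c + β * (x - p) ≤ 0 := by nlinarith
        have hx : D x = c + β * (x - p) := by
          simp [hDdef, not_le.2 hpx, min_eq_left hle]
        rw [hx]; exact h1
      · rw [heq] at hpx ⊢
        have hleft : HasDerivWithinAt f 0 (Iic s) s := by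
          have h0 : c + β * (s - p) = 0 := by linarith
          have hq0 : HasDerivWithinAt q 0 (Icc p s) s := by
            have h1 := (hq s).hasDerivWithinAt (s := Icc p s)
            rwa [h0] at h1
          have h1 : HasDerivWithinAt f 0 (Icc p s) s :=
            hq0.congr (fun y hy => hfq y hy) (hfq s ⟨hps, le_rfl⟩)
          exact h1.mono_of_mem_nhdsWithin (Icc_mem_nhdsLE_of_mem ⟨hpx, le_rfl⟩)
        have hright : HasDerivWithinAt f 0 (Ici s) s := by
          have h0 : HasDerivWithinAt (fun _ : ℝ => g p - c ^ 2 / (2 * β)) 0 (Ici s) s :=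
            hasDerivWithinAt_const _ _ _
          exact h0.congr (fun y hy => hfs y hy) (hfs s le_rfl)
        have hu := hleft.union hright
        rw [Iic_union_Ici] at hu
        have hD0 : D s = 0 := by
          have h0 : c + β * (s - p) = 0 := by linarith
          simp [hDdef, not_le.2 hpx, h0]
        rw [hD0]
        exact hasDerivWithinAt_univ.mp hu
      · have he : f =ᶠ[nhds x] fun _ => g p - c ^ 2 / (2 * β) := by
          filter_upwards [Ioi_mem_nhds hsx] with y hy
          exact hfs y hy.le
        have h1 : HasDerivAt f 0 x := (hasDerivAt_const x _).congr_of_eventuallyEq he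
        have hpos : 0 ≤ c + β * (x - p) := by nlinarith
        have hx : D x = 0 := by
          simp [hDdef, not_le.2 hpx, min_eq_right hpos]
        rw [hx]; exact h1
  have hdiff : Differentiable ℝ f := fun x => (hmain x).differentiableAt
  have hderiv : ∀ x : ℝ, deriv f x = D x := fun x => (hmain x).deriv
  have hgmono : Monotone (deriv g) := fun a b hab =>
    hgconv.monotoneOn_deriv (fun x _ => hgdiff x) (mem_univ a) (mem_univ b) hab
  have hDmono : Monotone D := by
    intro a b hab
    by_cases hap : a ≤ p
    · by_cases hbp : b ≤ p
      · simpa [hDdef, hap, hbp] using hgmono hab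
      · push_neg at hbp
        have h1 : deriv g a ≤ c := hc ▸ hgmono hap
        have h2 : c ≤ min (c + β * (b - p)) 0 := hcmin b hbp.le
        simp only [hDdef, if_pos hap, if_neg (not_le.2 hbp)]
        linarith
    · have hbp : ¬ b ≤ p := fun h => hap (hab.trans h)
      simp only [hDdef, if_neg hap, if_neg hbp]
      refine min_le_min ?_ le_rfl
      nlinarith
  have hfconv : ConvexOn ℝ Set.univ f := by
    have hmono : Monotone (deriv f) := by
      intro a b hab
      rw [hderiv a, hderiv b]
      exact hDmono hab
    exact hmono.convexOn_univ_of_deriv hdiff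
  have hmin01 : ∀ u v : ℝ, |min u 0 - min v 0| ≤ |u - v| := by
    intro u v
    rcases le_total u 0 with h1 | h1 <;> rcases le_total v 0 with h2 | h2 <;>
      simp only [min_eq_left, min_eq_right, h1, h2] <;>
      refine abs_le.2 ⟨?_, ?_⟩ <;>
      cases abs_cases (u - v) <;>
      first
        | linarith [le_abs_self (u - v), neg_abs_le (u - v)]
  have hDlip : ∀ a b : ℝ, a ≤ b → |D a - D b| ≤ β * (b - a) := by
    intro a b hab
    by_cases hbp : b ≤ p
    · have hap : a ≤ p := hab.trans hbp
      have := hgsmooth a b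
      rw [abs_of_nonpos (by linarith : a - b ≤ 0)] at this
      simpa [hDdef, hap, hbp] using (by linarith : |deriv g a - deriv g b| ≤ β * (b - a))
    · push_neg at hbp
      by_cases hap : a ≤ p
      · have h1 := hgsmooth a p
        rw [← hc, abs_of_nonpos (by linarith : a - p ≤ 0)] at h1
        obtain ⟨h1a, h1b⟩ := abs_le.1 h1
        have hm1 : c ≤ min (c + β * (b - p)) 0 := hcmin b hbp.le
        have hm2 : min (c + β * (b - p)) 0 ≤ c + β * (b - p) := min_le_left _ _
        simp only [hDdef, if_pos hap, if_neg (not_le.2 hbp)]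
        refine abs_le.2 ⟨?_, ?_⟩ <;> nlinarith
      · push_neg at hap
        have h0 : D a - D b = min (c + β * (a - p)) 0 - min (c + β * (b - p)) 0 := by
          simp [hDdef, not_le.2 hap, not_le.2 hbp]
        rw [h0]
        calc |min (c + β * (a - p)) 0 - min (c + β * (b - p)) 0|
            ≤ |(c + β * (a - p)) - (c + β * (b - p))| := hmin01 _ _
          _ = β * (b - a) := by
              rw [show (c + β * (a - p)) - (c + β * (b - p)) = -(β * (b - a)) by ring,
                abs_neg, abs_of_nonneg (by nlinarith)]
  have hsmooth : ∀ a b : ℝ, |deriv f a - deriv f b| ≤ β * |a - b| := by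
    intro a b
    rw [hderiv a, hderiv b]
    rcases le_total a b with h | h
    · rw [abs_of_nonpos (by linarith : a - b ≤ 0)]
      have := hDlip a b h; linarith
    · rw [abs_of_nonneg (by linarith : 0 ≤ a - b), abs_sub_comm]
      have := hDlip b a h; linarith
  have lip : LipschitzWith ⟨G, hG.le⟩ g := by
    refine LipschitzWith.of_dist_le_mul fun a b => ?_
    simp only [Real.dist_eq, NNReal.coe_mk]
    exact hglip a b
  have hGc : |c| ≤ G := by
    have := norm_deriv_le_of_lipschitz lip (x₀ := p)
    rw [← hc, Real.norm_eq_abs] at this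
    exact this
  have hDbound : ∀ x : ℝ, |D x| ≤ G := by
    intro x
    by_cases hxp : x ≤ p
    · have := norm_deriv_le_of_lipschitz lip (x₀ := x)
      rw [Real.norm_eq_abs] at this
      simp only [hDdef, if_pos hxp]
      exact this
    · push_neg at hxp
      have h1 : c ≤ min (c + β * (x - p)) 0 := hcmin x hxp.le
      have h2 : min (c + β * (x - p)) 0 ≤ 0 := min_le_right _ _
      simp only [hDdef, if_neg (not_le.2 hxp)]
      rw [abs_le]
      constructor
      · linarith [neg_abs_le c, abs_le.1 hGc]
      · linarith
  have hflip : ∀ a b : ℝ, |f a - f b| ≤ G * |a - b| := by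
    intro a b
    have := Convex.norm_image_sub_le_of_norm_deriv_le (f := f) (s := univ)
      (fun x _ => hdiff x)
      (fun x _ => by rw [Real.norm_eq_abs, hderiv x]; exact hDbound x)
      convex_univ (mem_univ b) (mem_univ a)
    simpa [Real.norm_eq_abs] using this
  have hK : f s = g p - c ^ 2 / (2 * β) := hfs s le_rfl
  have hminf : ∀ x : ℝ, f s ≤ f x := by
    intro x
    rcases le_or_gt x p with hxp | hpx
    · rw [hf1 x hxp, hK]
      have hant : AntitoneOn g (Iic p) := by
        refine antitoneOn_of_deriv_nonpos (convex_Iic p) hgdiff.continuous.continuousOn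
          hgdiff.differentiableOn fun y hy => ?_
        rw [interior_Iic] at hy
        exact le_trans (hc ▸ hgmono hy.le) hg'p
      have hgx : g p ≤ g x := hant (mem_Iic.2 hxp) (mem_Iic.2 le_rfl) hxp
      have h0 : 0 ≤ c ^ 2 / (2 * β) := div_nonneg (sq_nonneg c) (by linarith)
      linarith
    · rcases le_or_gt x s with hxs | hsx
      · rw [hfq x ⟨hpx.le, hxs⟩, hK]
        simp only [hqdef]
        have key : g p + c * (x - p) + β / 2 * (x - p) ^ 2 - (g p - c ^ 2 / (2 * β))
            = (β * (x - p) + c) ^ 2 / (2 * β) := by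
          field_simp
          ring
        have h2 : 0 ≤ (β * (x - p) + c) ^ 2 / (2 * β) :=
          div_nonneg (sq_nonneg _) (by linarith)
        linarith
      · rw [hfs x hsx.le, hK]
  have hds : deriv f s = 0 := by
    rw [hderiv s]
    rcases eq_or_lt_of_le hps with hsp | hsp
    · have hc0 : c = 0 := by
        have h := hβs
        rw [← hsp] at h
        simp at h
        linarith
      rw [← hsp]
      simp [hDdef, ← hc, ← hc0]
    · have h0 : c + β * (s - p) = 0 := by linarith
      simp [hDdef, not_le.2 hsp, h0]
  exact ⟨hfconv, hdiff, hsmooth, hflip, hminf, hds⟩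
end
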